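/- arXiv:2505.13340 — 9 statements merged into one kernel-verified Lean document; each statement's English description precedes it below -/
import Mathlib

section
/- For every Borel set A ⊆ ℝ^ν and every t ∈ ℝ^ν, Leb_ν(A ∩ (A − t)) ≤ 2 · Leb_ν(A ∩ {s ∈ ℝ^ν : |s| ≥ |t|/2}), where A − t := {s ∈ ℝ^ν : s + t ∈ A} and |·| denotes the Euclidean norm on ℝ^ν. -/
open MeasureTheory Set

/- Proof idea: if `s` and `s + t` both lie in the ball of radius `‖t‖ / 2`, the triangle inequality
gives `‖t‖ < ‖t‖`. So `A ∩ (A - t)` is covered by `B := A ∩ {‖t‖ / 2 ≤ ‖s‖}` and its translate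
`B - t`, which have the same measure by translation invariance. -/

lemma half_norm_le_or_half_norm_le_norm_add {E : Type*} [SeminormedAddGroup E] (s t : E) :
    ‖t‖ / 2 ≤ ‖s‖ ∨ ‖t‖ / 2 ≤ ‖s + t‖ := by
  by_contra! h
  have : ‖t‖ ≤ ‖s‖ + ‖s + t‖ := by
    simpa only [norm_neg, neg_add_cancel_left] using norm_add_le (-s) (s + t)
  linarith [h.1, h.2]

lemma measure_inter_preimage_add_right_le {E : Type*} [SeminormedAddGroup E] [MeasurableSpace E]
    [MeasurableAdd E] (μ : Measure E) [μ.IsAddRightInvariant] (A : Set E) (t : E) :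
    μ (A ∩ (· + t) ⁻¹' A) ≤ 2 * μ (A ∩ {s | ‖t‖ / 2 ≤ ‖s‖}) := by
  set B := A ∩ {s | ‖t‖ / 2 ≤ ‖s‖}
  have hcover : A ∩ (· + t) ⁻¹' A ⊆ B ∪ (· + t) ⁻¹' B := by
    rintro s ⟨hs, hst⟩
    rcases half_norm_le_or_half_norm_le_norm_add s t with h | h
    exacts [Or.inl ⟨hs, h⟩, Or.inr ⟨hst, h⟩]
  calc μ (A ∩ (· + t) ⁻¹' A) ≤ μ (B ∪ (· + t) ⁻¹' B) := measure_mono hcover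
    _ ≤ μ B + μ ((· + t) ⁻¹' B) := measure_union_le _ _
    _ = 2 * μ B := by rw [measure_preimage_add_right, two_mul]

theorem stmt_1_general (ν : ℕ)
    (A : Set (EuclideanSpace ℝ (Fin ν)))
    (t : EuclideanSpace ℝ (Fin ν)) :
    volume (A ∩ {s | s + t ∈ A}) ≤ 2 * volume (A ∩ {s | ‖t‖ / 2 ≤ ‖s‖}) :=
  measure_inter_preimage_add_right_le volume A t

/-- for every Borel set `A ⊆ ℝ^ν` and `t ∈ ℝ^ν`,
`Leb_ν(A ∩ (A − t)) ≤ 2 Leb_ν(A ∩ {|s| ≥ |t|/2})`. -/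
theorem stmt_1 (ν : ℕ) (hν : 1 ≤ ν)
    (A : Set (EuclideanSpace ℝ (Fin ν))) (hA : MeasurableSet A)
    (t : EuclideanSpace ℝ (Fin ν)) :
    volume (A ∩ {s | s + t ∈ A}) ≤ 2 * volume (A ∩ {s | ‖t‖ / 2 ≤ ‖s‖}) :=
  stmt_1_general ν A t
end

section
/- Let L be a nonnegative integrable random variable on a probability space and let θ ∈ ℝ. Then the function x ↦ (e^{iθx} − 1) · P(L > x) is Bochner integrable on (0, ∞) with respect to Lebesgue measure, and E[Ψ(θL)] = iθ ∫₀^∞ (e^{iθx} − 1) P(L > x) dx, where Ψ(z) := e^{iz} − 1 − iz for z ∈ ℝ (with i the imaginary unit and both sides complex numbers). -/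
open MeasureTheory Set
open scoped ENNReal

/-- `Ψ(z) := e^{iz} − 1 − iz`, the centered complex exponential. -/
noncomputable def Psi (z : ℝ) : ℂ := Complex.exp (Complex.I * z) - 1 - Complex.I * z

noncomputable def g (θ x : ℝ) : ℂ := Complex.exp (Complex.I * (θ * x)) - 1

lemma g_cont (θ : ℝ) : Continuous (g θ) := by
  unfold g
  fun_prop

lemma g_bound (θ x : ℝ) : ‖g θ x‖ ≤ 2 := by
  unfold g
  calc ‖Complex.exp (Complex.I * (θ * x)) - 1‖ ≤ ‖Complex.exp (Complex.I * (θ * x))‖ + ‖(1:ℂ)‖ :=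
        norm_sub_le _ _
    _ ≤ 2 := by
        rw [Complex.norm_exp]
        norm_num

lemma ftc (θ t : ℝ) (ht : 0 ≤ t) :
    Psi (θ * t) = Complex.I * θ * ∫ x in Ioc (0:ℝ) t, g θ x := by
  have hderiv : ∀ x ∈ Set.uIcc (0:ℝ) t, HasDerivAt
      (fun y : ℝ => Complex.exp (Complex.I * (θ * y)) - Complex.I * (θ * y))
      (Complex.I * θ * g θ x) x := by
    intro x _
    have h1 : HasDerivAt (fun w : ℂ => Complex.exp (Complex.I * (θ * w)) - Complex.I * (θ * w))
        (Complex.I * θ * Complex.exp (Complex.I * (θ * x)) - Complex.I * θ) (x:ℂ) := by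
      have ha : HasDerivAt (fun w : ℂ => Complex.I * (θ * w)) (Complex.I * θ) (x:ℂ) := by
        simpa [mul_assoc] using ((hasDerivAt_id (x:ℂ)).const_mul (Complex.I * θ))
      have h2 := ha.cexp.sub ha
      rw [mul_comm (Complex.exp _) _] at h2
      exact h2
    have := h1.comp_ofReal
    simpa [g, mul_sub] using this
  have hcont : ContinuousOn (fun x : ℝ => Complex.I * θ * g θ x) (Set.uIcc 0 t) :=
    (continuous_const.mul (g_cont θ)).continuousOn
  have h := intervalIntegral.integral_eq_sub_of_hasDerivAt hderiv
    ((continuous_const.mul (g_cont θ)).intervalIntegrable 0 t)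
  rw [intervalIntegral.integral_const_mul] at h
  rw [intervalIntegral.integral_of_le ht] at h
  rw [h]
  unfold Psi
  push_cast
  norm_num
  ring

/-- integration by parts for `E[Ψ(θL)]` with `L ≥ 0` integrable:
`x ↦ (e^{iθx} − 1) P(L > x)` is integrable on `(0,∞)` and
`E[Ψ(θL)] = iθ ∫₀^∞ (e^{iθx} − 1) P(L > x) dx`. -/
theorem stmt_2 {Ω : Type*} [MeasurableSpace Ω] (P : Measure Ω) [IsProbabilityMeasure P]
    (L : Ω → ℝ) (hLm : Measurable L) (hL : Integrable L P) (hL0 : ∀ ω, 0 ≤ L ω) (θ : ℝ) :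
    IntegrableOn
      (fun x : ℝ => (Complex.exp (Complex.I * (θ * x)) - 1) * (((P {ω | x < L ω}).toReal : ℝ) : ℂ))
      (Set.Ioi 0) volume ∧
    ∫ ω, Psi (θ * L ω) ∂P
      = Complex.I * θ *
        ∫ x in Set.Ioi (0:ℝ),
          (Complex.exp (Complex.I * (θ * x)) - 1) * (((P {ω | x < L ω}).toReal : ℝ) : ℂ) := by
  set ν : Measure ℝ := volume.restrict (Ioi 0) with hν
  set f : Ω → ℝ → ℂ := fun ω x => if x < L ω then g θ x else 0 with hf
  set S : Set (Ω × ℝ) := {z : Ω × ℝ | z.2 < L z.1} with hSdef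
  have hS : MeasurableSet S := measurableSet_lt measurable_snd (hLm.comp measurable_fst)
  have huncurry : Function.uncurry f = S.indicator (fun z => g θ z.2) := by
    funext z
    simp only [Function.uncurry, hf, Set.indicator, hSdef, Set.mem_setOf_eq]
  -- Integrability on the product
  have hmeas : Measurable (Function.uncurry f) := by
    rw [huncurry]
    exact ((g_cont θ).measurable.comp measurable_snd).indicator hS
  have hμS : (P.prod ν) S = ∫⁻ ω, ENNReal.ofReal (L ω) ∂P := by
    rw [Measure.prod_apply hS]
    congr 1
    funext ω
    have : Prod.mk ω ⁻¹' S = Iio (L ω) := rfl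
    rw [this, hν, Measure.restrict_apply measurableSet_Iio, Set.Iio_inter_Ioi,
      Real.volume_Ioo, sub_zero]
  have hμS_fin : (P.prod ν) S < ⊤ := by
    rw [hμS]
    have := hL.hasFiniteIntegral
    rw [hasFiniteIntegral_def] at this
    refine lt_of_le_of_lt (le_of_eq ?_) this
    congr 1
    funext ω
    rw [← ofReal_norm, Real.norm_eq_abs, abs_of_nonneg (hL0 ω)]
  have hint : Integrable (Function.uncurry f) (P.prod ν) := by
    refine ⟨hmeas.aestronglyMeasurable, ?_⟩
    rw [hasFiniteIntegral_def]
    calc ∫⁻ z, ‖Function.uncurry f z‖₊ ∂(P.prod ν)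
        ≤ ∫⁻ z, S.indicator (fun _ => (2:ℝ≥0∞)) z ∂(P.prod ν) := by
          refine lintegral_mono fun z => ?_
          rw [huncurry]
          by_cases hz : z ∈ S
          · simp only [Set.indicator_of_mem hz]
            have h2 := g_bound θ z.2
            have : (‖g θ z.2‖₊ : ℝ≥0∞) ≤ ENNReal.ofReal 2 := by
              rw [← enorm_eq_nnnorm, ← ofReal_norm]
              exact ENNReal.ofReal_le_ofReal h2
            simpa using this
          · simp [Set.indicator_of_notMem hz]
      _ = 2 * (P.prod ν) S := lintegral_indicator_const hS 2
      _ < ⊤ := ENNReal.mul_lt_top (by norm_num) hμS_fin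
  -- inner integral in x
  have hinner_x : ∀ ω, ∫ x, f ω x ∂ν = ∫ x in Ioc 0 (L ω), g θ x := by
    intro ω
    have : (fun x => f ω x) = (Iio (L ω)).indicator (g θ) := by
      funext x
      simp [hf, Set.indicator, Set.mem_Iio]
    rw [this, integral_indicator measurableSet_Iio, hν, Measure.restrict_restrict measurableSet_Iio,
      Set.Iio_inter_Ioi, ← integral_Ioc_eq_integral_Ioo]
  -- inner integral in ω
  have hinner_ω : ∀ x, ∫ ω, f ω x ∂P
      = g θ x * (((P {ω | x < L ω}).toReal : ℝ) : ℂ) := by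
    intro x
    have : (fun ω => f ω x) = Set.indicator {ω | x < L ω} (fun _ => g θ x) := by
      funext ω
      simp [hf, Set.indicator, Set.mem_setOf_eq]
    rw [this, integral_indicator_const _ (measurableSet_lt measurable_const hLm)]
    rw [Complex.real_smul, mul_comm]
    rfl
  constructor
  · have h1 := hint.integral_prod_right
    have h2 : (fun x => ∫ ω, Function.uncurry f (ω, x) ∂P)
        = fun x : ℝ => (Complex.exp (Complex.I * (θ * x)) - 1) * (((P {ω | x < L ω}).toReal : ℝ) : ℂ) := by
      funext x
      exact hinner_ω x
    rw [h2] at h1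
    exact h1
  · calc ∫ ω, Psi (θ * L ω) ∂P = ∫ ω, Complex.I * θ * (∫ x in Ioc 0 (L ω), g θ x) ∂P := by
          refine integral_congr_ae (Filter.Eventually.of_forall fun ω => ?_)
          exact ftc θ (L ω) (hL0 ω)
    _ = Complex.I * θ * ∫ ω, (∫ x, f ω x ∂ν) ∂P := by
          rw [← integral_const_mul]
          refine integral_congr_ae (Filter.Eventually.of_forall fun ω => ?_)
          simp only [hinner_x]
    _ = Complex.I * θ * ∫ x, (∫ ω, f ω x ∂P) ∂ν := by
          rw [integral_integral_swap hint]
    _ = _ := by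
          congr 1
          refine integral_congr_ae (Filter.Eventually.of_forall fun x => ?_)
          exact hinner_ω x
end

section
/- Let α ∈ (1, 2), c > 0, and let L be a nonnegative random variable satisfying lim_{x→∞} x^α P(L > x) = c. Set Ψ(z) := e^{iz} − 1 − iz for z ∈ ℝ. Then for every θ ∈ ℝ, the function x ↦ (e^{iθx} − 1) x^{−α} is absolutely integrable on (0, ∞), and lim_{λ→∞} λ · E[Ψ(θ λ^{−1/α} L)] = i c θ ∫₀^∞ (e^{iθx} − 1) x^{−α} dx, the limit being taken as λ → ∞ through the positive reals. -/
open MeasureTheory Set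
open scoped ENNReal

open Filter

section aux

lemma hasDerivAt_cexp_I_mul (b x : ℝ) :
    HasDerivAt (fun y : ℝ => Complex.exp (Complex.I * (b * y)))
      (Complex.I * b * Complex.exp (Complex.I * (b * x))) x := by
  have h : HasDerivAt (fun z : ℂ => Complex.exp (Complex.I * (b * z)))
      (Complex.I * b * Complex.exp (Complex.I * (b * x))) (x : ℂ) := by
    have := (Complex.hasDerivAt_exp (Complex.I * (b * (x:ℂ)))).comp (x:ℂ)
      (((hasDerivAt_id (x:ℂ)).const_mul (b:ℂ)).const_mul Complex.I)
    exact this.congr_deriv (by ring)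
  exact h.comp_ofReal

lemma norm_exp_I_mul_sub_one_le (t : ℝ) : ‖Complex.exp (Complex.I * t) - 1‖ ≤ |t| := by
  have key : Complex.exp (Complex.I * (1 * t)) - Complex.exp (Complex.I * ((1:ℝ) * 0)) =
      ∫ x in (0:ℝ)..t, Complex.I * 1 * Complex.exp (Complex.I * (1 * x)) :=
    (intervalIntegral.integral_eq_sub_of_hasDerivAt
      (fun x _ => hasDerivAt_cexp_I_mul 1 x)
      ((Continuous.intervalIntegrable (by continuity) _ _))).symm
  have h2 : ∀ x : ℝ, ‖Complex.I * 1 * Complex.exp (Complex.I * (1 * x))‖ ≤ 1 := by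
    intro x
    simp [Complex.norm_exp]
  calc ‖Complex.exp (Complex.I * t) - 1‖
      = ‖∫ x in (0:ℝ)..t, Complex.I * 1 * Complex.exp (Complex.I * (1 * x))‖ := by
        rw [← key]; norm_num
    _ ≤ 1 * |t - 0| := intervalIntegral.norm_integral_le_of_norm_le_const (fun x _ => h2 x)
    _ = |t| := by norm_num

lemma norm_exp_I_mul_sub_one_le_two (t : ℝ) : ‖Complex.exp (Complex.I * t) - 1‖ ≤ 2 := by
  have := norm_sub_le (Complex.exp (Complex.I * t)) 1
  have h1 : ‖Complex.exp (Complex.I * t)‖ = 1 := by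
    simp [Complex.norm_exp]
  simp only [norm_one, h1] at this
  linarith


lemma integrable_bound (α K θ : ℝ) (hα1 : 1 < α) (hα2 : α < 2) :
    IntegrableOn (fun x : ℝ => K * min 2 (|θ| * x) * x ^ (-α)) (Ioi 0) volume := by
  have hmeas : AEStronglyMeasurable (fun x : ℝ => K * min 2 (|θ| * x) * x ^ (-α))
      (volume.restrict (Ioi (0:ℝ))) := by
    apply Measurable.aestronglyMeasurable
    fun_prop
  have h1 : IntegrableOn (fun x : ℝ => K * min 2 (|θ| * x) * x ^ (-α)) (Ioc 0 1) volume := by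
    have hint : IntegrableOn (fun x : ℝ => |K| * |θ| * x ^ (1-α)) (Ioc 0 1) volume := by
      have := (intervalIntegral.intervalIntegrable_rpow' (a := 0) (b := 1)
        (r := 1 - α) (by linarith)).const_mul (|K| * |θ|)
      rw [intervalIntegrable_iff_integrableOn_Ioc_of_le (by norm_num)] at this
      exact this
    apply hint.integrable.mono (hmeas.mono_set Ioc_subset_Ioi_self)
    filter_upwards [ae_restrict_mem measurableSet_Ioc] with x hx
    have hx0 : (0:ℝ) < x := hx.1
    have hb : ‖min 2 (|θ| * x)‖ ≤ |θ| * x := by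
      rw [Real.norm_eq_abs, _root_.abs_of_nonneg (le_min (by norm_num) (by positivity))]
      exact min_le_right _ _
    have hr : (0:ℝ) ≤ x ^ (-α) := Real.rpow_nonneg hx0.le _
    calc ‖K * min 2 (|θ| * x) * x ^ (-α)‖
        = ‖K‖ * ‖min 2 (|θ| * x)‖ * ‖x ^ (-α)‖ := by simp [norm_mul]
      _ ≤ |K| * (|θ| * x) * x ^ (-α) := by
          apply mul_le_mul (mul_le_mul le_rfl hb (norm_nonneg _) (abs_nonneg _)) _
            (norm_nonneg _) (by positivity)
          rw [Real.norm_eq_abs, _root_.abs_of_nonneg hr]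
      _ = ‖|K| * |θ| * x ^ (1-α)‖ := by
          rw [Real.norm_eq_abs, _root_.abs_of_nonneg (mul_nonneg (mul_nonneg (abs_nonneg K)
            (abs_nonneg θ)) (Real.rpow_nonneg hx0.le _))]
          rw [show (1:ℝ) - α = 1 + (-α) by ring, Real.rpow_add hx0, Real.rpow_one]
          ring
  have h2 : IntegrableOn (fun x : ℝ => K * min 2 (|θ| * x) * x ^ (-α)) (Ioi 1) volume := by
    have hint : IntegrableOn (fun x : ℝ => |K| * 2 * x ^ (-α)) (Ioi 1) volume :=
      (integrableOn_Ioi_rpow_of_lt (by linarith) (by norm_num)).const_mul _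
    apply hint.integrable.mono (hmeas.mono_set (Ioi_subset_Ioi (by norm_num)))
    filter_upwards [ae_restrict_mem measurableSet_Ioi] with x hx
    have hx0 : (0:ℝ) < x := lt_trans one_pos hx
    have hr : (0:ℝ) ≤ x ^ (-α) := Real.rpow_nonneg hx0.le _
    have hb : ‖min 2 (|θ| * x)‖ ≤ 2 := by
      rw [Real.norm_eq_abs, _root_.abs_of_nonneg (le_min (by norm_num) (by positivity))]
      exact min_le_left _ _
    calc ‖K * min 2 (|θ| * x) * x ^ (-α)‖
        = ‖K‖ * ‖min 2 (|θ| * x)‖ * ‖x ^ (-α)‖ := by simp [norm_mul]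
      _ ≤ |K| * 2 * x ^ (-α) := by
          apply mul_le_mul (mul_le_mul le_rfl hb (norm_nonneg _) (abs_nonneg _)) _
            (norm_nonneg _) (by positivity)
          rw [Real.norm_eq_abs, _root_.abs_of_nonneg hr]
      _ = ‖|K| * 2 * x ^ (-α)‖ := by
          rw [Real.norm_eq_abs, _root_.abs_of_nonneg (mul_nonneg (mul_nonneg (abs_nonneg K)
            (by norm_num)) hr)]
  have := h1.union h2
  rwa [Ioc_union_Ioi_eq_Ioi (by norm_num : (0:ℝ) ≤ 1)] at this

lemma integrable_main (α θ : ℝ) (hα1 : 1 < α) (hα2 : α < 2) :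
    IntegrableOn
      (fun x : ℝ => (Complex.exp (Complex.I * (θ * x)) - 1) * ((x ^ (-α) : ℝ) : ℂ))
      (Set.Ioi 0) volume := by
  apply (integrable_bound α 1 θ hα1 hα2).integrable.mono
  · apply Measurable.aestronglyMeasurable
    fun_prop
  · filter_upwards [ae_restrict_mem measurableSet_Ioi] with x hx
    have hx0 : (0:ℝ) < x := hx
    have hr : (0:ℝ) ≤ x ^ (-α) := Real.rpow_nonneg hx0.le _
    have hb : ‖Complex.exp (Complex.I * (θ * x)) - 1‖ ≤ min 2 (|θ| * x) := by
      apply le_min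
      · simpa using norm_exp_I_mul_sub_one_le_two (θ * x)
      · have := norm_exp_I_mul_sub_one_le (θ * x)
        rw [abs_mul, _root_.abs_of_nonneg hx0.le] at this
        simpa using this
    calc ‖(Complex.exp (Complex.I * (θ * x)) - 1) * ((x ^ (-α) : ℝ) : ℂ)‖
        = ‖Complex.exp (Complex.I * (θ * x)) - 1‖ * (x ^ (-α)) := by
          rw [norm_mul, Complex.norm_real, Real.norm_eq_abs, _root_.abs_of_nonneg hr]
      _ ≤ min 2 (|θ| * x) * x ^ (-α) :=
          mul_le_mul_of_nonneg_right hb hr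
      _ = ‖(1:ℝ) * min 2 (|θ| * x) * x ^ (-α)‖ := by
          rw [Real.norm_eq_abs, _root_.abs_of_nonneg (mul_nonneg (mul_nonneg zero_le_one
            (le_min (by norm_num) (by positivity))) hr), one_mul]


/-- FTC: Ψ(b u) = ∫_{(0,u)} i b (e^{ibx} - 1) dx for u ≥ 0. -/
lemma Psi_eq_integral (b u : ℝ) (hu : 0 ≤ u) :
    Psi (b * u) = ∫ x in Ioo (0:ℝ) u,
      Complex.I * b * (Complex.exp (Complex.I * (b * x)) - 1) := by
  have hderiv : ∀ x ∈ uIcc (0:ℝ) u, HasDerivAt (fun y : ℝ => Psi (b * y))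
      (Complex.I * b * (Complex.exp (Complex.I * (b * x)) - 1)) x := by
    intro x _
    unfold Psi
    have h1 := hasDerivAt_cexp_I_mul b x
    have h2 : HasDerivAt (fun y : ℝ => Complex.I * ((b * y : ℝ) : ℂ)) (Complex.I * b) x := by
      have : HasDerivAt (fun y : ℝ => ((b * y : ℝ) : ℂ)) (b : ℂ) x := by
        simpa using Complex.ofRealCLM.hasDerivAt.const_mul (b : ℂ)
      simpa [mul_comm] using this.const_mul Complex.I
    have := (h1.sub_const 1).sub h2
    convert this using 1
    · rfl
    · ext y; simp only [Pi.sub_apply]; push_cast; ring_nf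
    · ring
  have key := intervalIntegral.integral_eq_sub_of_hasDerivAt hderiv
    ((Continuous.intervalIntegrable (by continuity) _ _))
  rw [intervalIntegral.integral_of_le hu] at key
  rw [integral_Ioc_eq_integral_Ioo] at key
  rw [key]
  simp [Psi]


variable {Ω : Type*} [MeasurableSpace Ω] (P : Measure Ω) [IsProbabilityMeasure P]

set_option linter.unusedSectionVars false

/-- tail bound: ∃ x₀ ≥ 1, ∀ x ≥ x₀, p(x) ≤ (c+1) x^{-α} -/
lemma tail_bound {α c : ℝ} {L : Ω → ℝ}
    (htail : Filter.Tendsto (fun x : ℝ => x ^ α * (P {ω | x < L ω}).toReal)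
      Filter.atTop (nhds c)) :
    ∃ x₀ : ℝ, 1 ≤ x₀ ∧ ∀ x ≥ x₀, (P {ω | x < L ω}).toReal ≤ (c + 1) * x ^ (-α) := by
  have h := htail.eventually (eventually_le_nhds (lt_add_one c))
  rw [Filter.eventually_atTop] at h
  obtain ⟨x₁, hx₁⟩ := h
  refine ⟨max x₁ 1, le_max_right _ _, fun x hx => ?_⟩
  have hx1 : (1:ℝ) ≤ x := le_trans (le_max_right _ _) hx
  have hx0 : (0:ℝ) < x := lt_of_lt_of_le one_pos hx1
  have hb := hx₁ x (le_trans (le_max_left _ _) hx)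
  have hxa : (0:ℝ) < x ^ α := Real.rpow_pos_of_pos hx0 α
  have : x ^ α * (P {ω | x < L ω}).toReal * x ^ (-α) ≤ (c + 1) * x ^ (-α) :=
    mul_le_mul_of_nonneg_right hb (Real.rpow_nonneg hx0.le _)
  rwa [mul_comm (x ^ α) _, mul_assoc, ← Real.rpow_add hx0, add_neg_cancel,
    Real.rpow_zero, mul_one] at this

/-- L is integrable. -/
lemma integrable_L {α c : ℝ} (hα1 : 1 < α) {L : Ω → ℝ}
    (hLm : Measurable L) (hL0 : ∀ ω, 0 ≤ L ω)
    (htail : Filter.Tendsto (fun x : ℝ => x ^ α * (P {ω | x < L ω}).toReal)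
      Filter.atTop (nhds c)) :
    Integrable L P := by
  obtain ⟨x₀, hx₀1, hx₀⟩ := tail_bound P htail
  have hx₀0 : (0:ℝ) < x₀ := lt_of_lt_of_le one_pos hx₀1
  constructor
  · exact hLm.aestronglyMeasurable
  · rw [hasFiniteIntegral_iff_norm]
    have hnorm : ∀ ω, ENNReal.ofReal ‖L ω‖ = ENNReal.ofReal (L ω) := fun ω => by
      rw [Real.norm_eq_abs, abs_of_nonneg (hL0 ω)]
    simp_rw [hnorm]
    rw [lintegral_eq_lintegral_meas_lt P (Filter.Eventually.of_forall hL0) hLm.aemeasurable]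
    -- split Ioi 0 = Ioc 0 x₀ ∪ Ioi x₀
    rw [← Ioc_union_Ioi_eq_Ioi hx₀0.le, lintegral_union measurableSet_Ioi Ioc_disjoint_Ioi_same]
    have h1 : ∫⁻ t in Ioc (0:ℝ) x₀, P {a | t < L a} ≤ ENNReal.ofReal x₀ := by
      calc ∫⁻ t in Ioc (0:ℝ) x₀, P {a | t < L a} ≤ ∫⁻ _ in Ioc (0:ℝ) x₀, 1 :=
            lintegral_mono (fun t => prob_le_one)
        _ = volume (Ioc (0:ℝ) x₀) := by simp
        _ = ENNReal.ofReal x₀ := by rw [Real.volume_Ioc]; norm_num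
    have h2 : ∫⁻ t in Ioi x₀, P {a | t < L a} < ⊤ := by
      have hle : ∀ᵐ t ∂(volume.restrict (Ioi x₀)), P {a | t < L a} ≤
          ENNReal.ofReal ((c + 1) * t ^ (-α)) := by
        filter_upwards [ae_restrict_mem measurableSet_Ioi] with t ht
        have := hx₀ t (le_of_lt ht)
        calc P {a | t < L a} = ENNReal.ofReal (P {a | t < L a}).toReal := by
              rw [ENNReal.ofReal_toReal (measure_ne_top P _)]
          _ ≤ ENNReal.ofReal ((c + 1) * t ^ (-α)) := ENNReal.ofReal_le_ofReal this
      calc ∫⁻ t in Ioi x₀, P {a | t < L a}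
          ≤ ∫⁻ t in Ioi x₀, ENNReal.ofReal ((c + 1) * t ^ (-α)) := lintegral_mono_ae hle
        _ < ⊤ := by
            have hint : IntegrableOn (fun t : ℝ => (c + 1) * t ^ (-α)) (Ioi x₀) volume :=
              (integrableOn_Ioi_rpow_of_lt (by linarith) hx₀0).const_mul _
            exact hint.integrable.lintegral_lt_top
    exact ENNReal.add_lt_top.mpr ⟨lt_of_le_of_lt h1 ENNReal.ofReal_lt_top, h2⟩


lemma tail_repr (b : ℝ) {L : Ω → ℝ} (hLm : Measurable L) (hL0 : ∀ ω, 0 ≤ L ω)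
    (hLi : Integrable L P) :
    ∫ ω, Psi (b * L ω) ∂P =
      ∫ x in Ioi (0:ℝ),
        Complex.I * b * (Complex.exp (Complex.I * (b * x)) - 1) *
          (((P {ω | x < L ω}).toReal : ℝ) : ℂ) := by
  set h : ℝ → ℂ := fun x => Complex.I * b * (Complex.exp (Complex.I * (b * x)) - 1) with hh
  have hcont : Continuous h := by unfold h; continuity
  have hnorm : ∀ x, ‖h x‖ ≤ 2 * |b| := by
    intro x
    unfold h
    rw [norm_mul, norm_mul]
    have := norm_exp_I_mul_sub_one_le_two (b * x)
    push_cast at this ⊢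
    calc ‖Complex.I‖ * ‖(b:ℂ)‖ * ‖Complex.exp (Complex.I * (↑b * ↑x)) - 1‖
        ≤ 1 * |b| * 2 := by
          rw [Complex.norm_I, Complex.norm_real, Real.norm_eq_abs]
          apply mul_le_mul_of_nonneg_left _ (by positivity)
          simpa using this
      _ = 2 * |b| := by ring
  set S : Set (Ω × ℝ) := {p : Ω × ℝ | p.2 < L p.1} with hS
  have hSm : MeasurableSet S := measurableSet_lt measurable_snd (hLm.comp measurable_fst)
  set F : Ω → ℝ → ℂ := fun ω x => S.indicator (fun p => h p.2) (ω, x) with hF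
  -- each slice
  have hstep1 : ∀ ω, Psi (b * L ω) = ∫ x in Ioi (0:ℝ), F ω x := by
    intro ω
    have : (fun x => F ω x) = fun x => (Iio (L ω)).indicator h x := by
      ext x
      unfold F S
      by_cases hx : x < L ω <;> simp [Set.indicator, hx]
    rw [this, setIntegral_indicator measurableSet_Iio, Ioi_inter_Iio,
      ← Psi_eq_integral b (L ω) (hL0 ω)]
  -- product integrability
  have hprod : Integrable (Function.uncurry F) (P.prod (volume.restrict (Ioi 0))) := by
    have hmeas : AEStronglyMeasurable (Function.uncurry F)
        (P.prod (volume.restrict (Ioi 0))) := by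
      apply Measurable.aestronglyMeasurable
      have : Measurable fun p : Ω × ℝ => h p.2 := (hcont.measurable).comp measurable_snd
      exact this.indicator hSm
    have hSfin : (P.prod (volume.restrict (Ioi 0))) S < ⊤ := by
      rw [Measure.prod_apply hSm]
      have hpre : ∀ ω, (Prod.mk ω ⁻¹' S) = Iio (L ω) := fun ω => rfl
      calc ∫⁻ ω, (volume.restrict (Ioi 0)) (Prod.mk ω ⁻¹' S) ∂P
          ≤ ∫⁻ ω, ENNReal.ofReal (L ω) ∂P := by
            apply lintegral_mono
            intro ω
            show (volume.restrict (Ioi 0)) (Prod.mk ω ⁻¹' S) ≤ _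
            rw [hpre, Measure.restrict_apply measurableSet_Iio]
            rw [show Iio (L ω) ∩ Ioi 0 = Ioo 0 (L ω) by rw [inter_comm, Ioi_inter_Iio]]
            rw [Real.volume_Ioo]
            exact ENNReal.ofReal_le_ofReal (by simp)
        _ < ⊤ := hLi.lintegral_lt_top
    apply Integrable.mono' ((integrable_indicator_iff hSm).2 (by
      rw [integrableOn_const_iff]; exact Or.inr hSfin) : Integrable (S.indicator fun _ => (2*|b| : ℝ)) _)
    · exact hmeas
    · apply Filter.Eventually.of_forall
      rintro ⟨ω, x⟩
      unfold F
      by_cases hp : (ω, x) ∈ S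
      · simp only [Function.uncurry, Set.indicator_of_mem hp]
        exact hnorm x
      · simp [Function.uncurry, Set.indicator_of_notMem hp]
  -- swap
  calc ∫ ω, Psi (b * L ω) ∂P = ∫ ω, ∫ x in Ioi (0:ℝ), F ω x ∂volume ∂P := by
        exact integral_congr_ae (Filter.Eventually.of_forall fun ω => hstep1 ω)
    _ = ∫ x in Ioi (0:ℝ), ∫ ω, F ω x ∂P ∂volume := integral_integral_swap hprod
    _ = ∫ x in Ioi (0:ℝ), h x * (((P {ω | x < L ω}).toReal : ℝ) : ℂ) := by
        apply integral_congr_ae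
        apply Filter.Eventually.of_forall
        intro x
        have : (fun ω => F ω x) = ({ω | x < L ω}).indicator (fun _ => h x) := by
          ext ω
          unfold F S
          by_cases hω : x < L ω <;> simp [Set.indicator, hω]
        show (∫ ω, F ω x ∂P) = h x * ((P {ω | x < L ω}).toReal : ℂ)
        have hms : MeasurableSet {ω | x < L ω} := hLm measurableSet_Ioi
        rw [this, integral_indicator_const (h x) hms]
        rw [Complex.real_smul, mul_comm]
        rfl
    _ = _ := rfl


lemma dct_step {α c θ x₀ : ℝ} (hα1 : 1 < α) (hα2 : α < 2) (hc : 0 < c) (hx₀1 : 1 ≤ x₀)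
    {p : ℝ → ℝ} (hp_meas : Measurable p) (hp0 : ∀ x, 0 ≤ p x) (hp1 : ∀ x, p x ≤ 1)
    (hbd : ∀ x ≥ x₀, p x ≤ (c + 1) * x ^ (-α))
    (hlim : Tendsto (fun x => x ^ α * p x) atTop (nhds c)) :
    Tendsto (fun lam : ℝ => ∫ y in Ioi (0:ℝ),
        (Complex.exp (Complex.I * (θ * y)) - 1) * ((lam * p (lam ^ (1/α) * y) : ℝ) : ℂ))
      atTop
      (nhds (∫ y in Ioi (0:ℝ),
        (Complex.exp (Complex.I * (θ * y)) - 1) * ((c * y ^ (-α) : ℝ) : ℂ))) := by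
  have hα0 : (0:ℝ) < α := by linarith
  have hx₀0 : (0:ℝ) < x₀ := lt_of_lt_of_le one_pos hx₀1
  set K : ℝ := (c + 1) + x₀ ^ α with hK
  have hK0 : 0 ≤ K := by positivity
  apply tendsto_integral_filter_of_dominated_convergence
    (bound := fun y => K * min 2 (|θ| * y) * y ^ (-α))
  · -- measurability
    filter_upwards [eventually_ge_atTop (1:ℝ)] with lam _
    apply Measurable.aestronglyMeasurable
    apply Measurable.mul
    · fun_prop
    · apply Complex.measurable_ofReal.comp
      exact (hp_meas.comp (measurable_const.mul measurable_id')).const_mul lam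
  · -- bound
    filter_upwards [eventually_ge_atTop (1:ℝ)] with lam hlam
    filter_upwards [ae_restrict_mem measurableSet_Ioi] with y hy
    have hy0 : (0:ℝ) < y := hy
    have hlam0 : (0:ℝ) < lam := lt_of_lt_of_le one_pos hlam
    set s : ℝ := lam ^ (1/α) with hs
    have hs0 : (0:ℝ) < s := Real.rpow_pos_of_pos hlam0 _
    have hyr : (0:ℝ) ≤ y ^ (-α) := Real.rpow_nonneg hy0.le _
    -- lam * p (s*y) ≤ K * y^{-α}
    have hkey : lam * p (s * y) ≤ K * y ^ (-α) := by
      rcases le_or_gt x₀ (s * y) with h | h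
      · -- tail regime
        have h1 : p (s * y) ≤ (c + 1) * (s * y) ^ (-α) := hbd _ h
        have h2 : (s * y) ^ (-α) = s ^ (-α) * y ^ (-α) :=
          Real.mul_rpow hs0.le hy0.le
        have h3 : s ^ (-α) = lam⁻¹ := by
          rw [hs, ← Real.rpow_mul hlam0.le]
          rw [show 1/α * (-α) = -1 by field_simp]
          exact Real.rpow_neg_one lam
        calc lam * p (s * y) ≤ lam * ((c + 1) * (s ^ (-α) * y ^ (-α))) := by
              rw [← h2]
              exact mul_le_mul_of_nonneg_left h1 hlam0.le
          _ = (c + 1) * y ^ (-α) * (lam * s ^ (-α)) := by ring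
          _ = (c + 1) * y ^ (-α) := by
              rw [h3, mul_inv_cancel₀ hlam0.ne', mul_one]
          _ ≤ K * y ^ (-α) := by
              apply mul_le_mul_of_nonneg_right _ hyr
              nlinarith [Real.rpow_pos_of_pos hx₀0 α]
      · -- small regime
        have hlameq : lam = s ^ α := by
          rw [hs, ← Real.rpow_mul hlam0.le, one_div, inv_mul_cancel₀ hα0.ne', Real.rpow_one]
        have h1 : s ^ α ≤ (x₀ / y) ^ α := by
          apply Real.rpow_le_rpow hs0.le _ hα0.le
          rw [le_div_iff₀ hy0]
          exact h.le
        have h2 : (x₀ / y) ^ α = x₀ ^ α * y ^ (-α) := by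
          rw [Real.div_rpow hx₀0.le hy0.le, Real.rpow_neg hy0.le, div_eq_mul_inv]
        calc lam * p (s * y) ≤ lam * 1 := mul_le_mul_of_nonneg_left (hp1 _) hlam0.le
          _ = s ^ α := by rw [mul_one, hlameq]
          _ ≤ x₀ ^ α * y ^ (-α) := by rw [← h2]; exact h1
          _ ≤ K * y ^ (-α) := by
              apply mul_le_mul_of_nonneg_right _ hyr
              nlinarith
    have hb : ‖Complex.exp (Complex.I * (θ * y)) - 1‖ ≤ min 2 (|θ| * y) := by
      apply le_min
      · simpa using norm_exp_I_mul_sub_one_le_two (θ * y)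
      · have := norm_exp_I_mul_sub_one_le (θ * y)
        rw [abs_mul, abs_of_nonneg hy0.le] at this
        simpa using this
    have hpn : 0 ≤ lam * p (s * y) := mul_nonneg hlam0.le (hp0 _)
    calc ‖(Complex.exp (Complex.I * (θ * y)) - 1) * ((lam * p (s * y) : ℝ) : ℂ)‖
        = ‖Complex.exp (Complex.I * (θ * y)) - 1‖ * (lam * p (s * y)) := by
          rw [norm_mul, Complex.norm_real, Real.norm_eq_abs, abs_of_nonneg hpn]
      _ ≤ min 2 (|θ| * y) * (K * y ^ (-α)) :=
          mul_le_mul hb hkey hpn (le_min (by norm_num) (by positivity))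
      _ = K * min 2 (|θ| * y) * y ^ (-α) := by ring
  · -- integrable bound
    exact integrable_bound α K θ hα1 hα2
  · -- pointwise limit
    filter_upwards [ae_restrict_mem measurableSet_Ioi] with y hy
    have hy0 : (0:ℝ) < y := hy
    have hreal : Tendsto (fun lam : ℝ => lam * p (lam ^ (1/α) * y)) atTop
        (nhds (c * y ^ (-α))) := by
      have hcomp : Tendsto (fun lam : ℝ => lam ^ (1/α) * y) atTop atTop :=
        (tendsto_rpow_atTop (by positivity)).atTop_mul_const hy0
      have h1 : Tendsto (fun lam : ℝ =>
          ((lam ^ (1/α) * y) ^ α * p (lam ^ (1/α) * y)) * y ^ (-α)) atTop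
          (nhds (c * y ^ (-α))) :=
        (hlim.comp hcomp).mul_const _
      apply h1.congr'
      filter_upwards [eventually_gt_atTop (0:ℝ)] with lam hlam0
      have hs0 : (0:ℝ) < lam ^ (1/α) := Real.rpow_pos_of_pos hlam0 _
      have he : (lam ^ (1/α) * y) ^ α = lam * y ^ α := by
        rw [Real.mul_rpow hs0.le hy0.le, ← Real.rpow_mul hlam0.le,
          one_div, inv_mul_cancel₀ (by positivity : α ≠ 0), Real.rpow_one]
      rw [he]
      have : y ^ α * y ^ (-α) = 1 := by
        rw [← Real.rpow_add hy0, add_neg_cancel, Real.rpow_zero]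
      calc lam * y ^ α * p (lam ^ (1/α) * y) * y ^ (-α)
          = lam * p (lam ^ (1/α) * y) * (y ^ α * y ^ (-α)) := by ring
        _ = lam * p (lam ^ (1/α) * y) := by rw [this, mul_one]
    exact tendsto_const_nhds.mul ((Complex.continuous_ofReal.tendsto _).comp hreal)


end aux

/-- if `x^α P(L > x) → c` with `α ∈ (1,2)`, `c > 0`, then for every `θ`,
`x ↦ (e^{iθx} − 1) x^{−α}` is integrable on `(0,∞)` and
`λ E[Ψ(θ λ^{−1/α} L)] → i c θ ∫₀^∞ (e^{iθx} − 1) x^{−α} dx` as `λ → ∞`. -/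
theorem stmt_3 {Ω : Type*} [MeasurableSpace Ω] (P : Measure Ω) [IsProbabilityMeasure P]
    (α c : ℝ) (hα1 : 1 < α) (hα2 : α < 2) (hc : 0 < c)
    (L : Ω → ℝ) (hLm : Measurable L) (hL0 : ∀ ω, 0 ≤ L ω)
    (htail : Filter.Tendsto (fun x : ℝ => x ^ α * (P {ω | x < L ω}).toReal)
      Filter.atTop (nhds c))
    (θ : ℝ) :
    IntegrableOn
      (fun x : ℝ => (Complex.exp (Complex.I * (θ * x)) - 1) * ((x ^ (-α) : ℝ) : ℂ))
      (Set.Ioi 0) volume ∧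
    Filter.Tendsto
      (fun lam : ℝ => (lam : ℂ) * ∫ ω, Psi (θ * (lam ^ (-(1:ℝ)/α) * L ω)) ∂P)
      Filter.atTop
      (nhds (Complex.I * c * θ *
        ∫ x in Set.Ioi (0:ℝ),
          (Complex.exp (Complex.I * (θ * x)) - 1) * ((x ^ (-α) : ℝ) : ℂ))) := by
  refine ⟨integrable_main α θ hα1 hα2, ?_⟩
  set p : ℝ → ℝ := fun x => (P {ω | x < L ω}).toReal with hp
  have hp_meas : Measurable p := by
    apply Measurable.ennreal_toReal
    apply Antitone.measurable
    intro u v huv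
    exact measure_mono (fun ω hω => lt_of_le_of_lt huv hω)
  have hp0 : ∀ x, 0 ≤ p x := fun x => ENNReal.toReal_nonneg
  have hp1 : ∀ x, p x ≤ 1 := by
    intro x
    rw [hp, ← ENNReal.toReal_one]
    exact ENNReal.toReal_mono ENNReal.one_ne_top prob_le_one
  obtain ⟨x₀, hx₀1, hbd⟩ := tail_bound P htail
  have hLi : Integrable L P := integrable_L P hα1 hLm hL0 htail
  -- the DCT limit
  have hdct := dct_step (θ := θ) hα1 hα2 hc hx₀1 hp_meas hp0 hp1 hbd htail
  have hmain := hdct.const_mul (Complex.I * (θ:ℂ))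
  -- identify the limit value
  have hval : (Complex.I * (θ:ℂ)) * (∫ y in Ioi (0:ℝ),
        (Complex.exp (Complex.I * (θ * y)) - 1) * ((c * y ^ (-α) : ℝ) : ℂ)) =
      Complex.I * c * θ * ∫ x in Set.Ioi (0:ℝ),
        (Complex.exp (Complex.I * (θ * x)) - 1) * ((x ^ (-α) : ℝ) : ℂ) := by
    have : (fun y : ℝ => (Complex.exp (Complex.I * (θ * y)) - 1) * ((c * y ^ (-α) : ℝ) : ℂ)) =
        fun y : ℝ => (c : ℂ) * ((Complex.exp (Complex.I * (θ * y)) - 1) * ((y ^ (-α) : ℝ) : ℂ)) := by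
      funext y; push_cast; ring
    rw [this, integral_const_mul]
    ring
  rw [← hval]
  apply hmain.congr'
  -- eventual equality of the two expressions
  filter_upwards [eventually_ge_atTop (1:ℝ)] with lam hlam
  symm
  have hlam0 : (0:ℝ) < lam := lt_of_lt_of_le one_pos hlam
  set a : ℝ := lam ^ (-(1:ℝ)/α) with ha
  set s : ℝ := lam ^ ((1:ℝ)/α) with hs
  have hs0 : (0:ℝ) < s := Real.rpow_pos_of_pos hlam0 _
  have has : a * s = 1 := by
    rw [ha, hs, ← Real.rpow_add hlam0, show -(1:ℝ)/α + 1/α = 0 by ring, Real.rpow_zero]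
  set b : ℝ := θ * a with hb
  -- rewrite Psi argument
  have hPsiArg : (fun ω => Psi (θ * (a * L ω))) = fun ω => Psi (b * L ω) := by
    funext ω; rw [hb, mul_assoc]
  -- tail representation
  have hrep := tail_repr P b hLm hL0 hLi
  -- substitution
  set g : ℝ → ℂ := fun x => Complex.I * (b:ℂ) * (Complex.exp (Complex.I * (b * x)) - 1) *
      (((P {ω | x < L ω}).toReal : ℝ) : ℂ) with hg
  have hsub : (∫ x in Ioi (0:ℝ), g x) = s • ∫ y in Ioi (0:ℝ), g (s * y) := by
    rw [integral_comp_mul_left_Ioi g 0 hs0, mul_zero, smul_smul,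
      mul_inv_cancel₀ hs0.ne', one_smul]
  -- pointwise identity
  have hpoint : (fun y : ℝ => ((lam : ℂ) * (s : ℂ)) * g (s * y)) =
      fun y : ℝ => (Complex.I * (θ:ℂ)) *
        ((Complex.exp (Complex.I * (θ * y)) - 1) * ((lam * p (lam ^ ((1:ℝ)/α) * y) : ℝ) : ℂ)) := by
    funext y
    have hbs : b * (s * y) = θ * y := by
      rw [hb]; rw [show θ * a * (s * y) = θ * y * (a * s) by ring, has, mul_one]
    have hcoef : lam * s * b = lam * θ := by
      rw [hb]; rw [show lam * s * (θ * a) = lam * θ * (a * s) by ring, has, mul_one]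
    have hbsC : (b:ℂ) * (((s * y : ℝ)) : ℂ) = (θ:ℂ) * (y:ℂ) := by
      have := congrArg (Complex.ofReal) hbs
      push_cast at this
      push_cast
      linear_combination this
    have hcoefC : (lam:ℂ) * (s:ℂ) * (b:ℂ) = (lam:ℂ) * (θ:ℂ) := by
      exact_mod_cast congrArg (Complex.ofReal) hcoef
    rw [hg]
    simp only [← hs]
    rw [hbsC]
    push_cast
    rw [hp]
    linear_combination Complex.I * (Complex.exp (Complex.I * ((θ:ℂ) * (y:ℂ))) - 1) *
      (((P {ω | s * y < L ω}).toReal : ℂ)) * hcoefC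
  calc (lam : ℂ) * ∫ ω, Psi (θ * (lam ^ (-(1:ℝ)/α) * L ω)) ∂P
      = (lam : ℂ) * ∫ ω, Psi (b * L ω) ∂P := by rw [← ha, hPsiArg]
    _ = (lam : ℂ) * ∫ x in Ioi (0:ℝ), g x := by rw [hrep, hg]
    _ = (lam : ℂ) * ((s:ℂ) * ∫ y in Ioi (0:ℝ), g (s * y)) := by
        rw [hsub, Complex.real_smul]
    _ = ((lam : ℂ) * (s : ℂ)) * ∫ y in Ioi (0:ℝ), g (s * y) := by ring
    _ = ∫ y in Ioi (0:ℝ), ((lam : ℂ) * (s : ℂ)) * g (s * y) := (integral_const_mul _ _).symm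
    _ = ∫ y in Ioi (0:ℝ), (Complex.I * (θ:ℂ)) *
          ((Complex.exp (Complex.I * (θ * y)) - 1) *
            ((lam * p (lam ^ ((1:ℝ)/α) * y) : ℝ) : ℂ)) := by rw [hpoint]
    _ = (Complex.I * (θ:ℂ)) * ∫ y in Ioi (0:ℝ),
          (Complex.exp (Complex.I * (θ * y)) - 1) *
            ((lam * p (lam ^ ((1:ℝ)/α) * y) : ℝ) : ℂ) := integral_const_mul _ _
end

section
/- Let R and Y be independent real random variables with R ≥ 0 almost surely and 0 < Y ≤ M almost surely for some constant M > 0. Let α > 0 and c > 0 and suppose lim_{x→∞} x^α P(R > x) = c. Then lim_{x→∞} x^α P(R·Y > x) = c · E[Y^α]. -/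
/-!
By independence, `P(RY > x) = ∫ P(R > x / y) dν(y)` with `ν` the law of `Y`, and
`x^α P(R > x / y) = y^α · (x / y)^α P(R > x / y) → c y^α` for each `y > 0`. Since `t^α P(R > t)`
is bounded on `(0, ∞)` and `Y ≤ M`, the integrands are dominated by a constant, and dominated
convergence gives the limit `c E[Y^α]`.
-/

open MeasureTheory Set Filter Topology

lemma measurableSet_lt_fst_mul_snd (x : ℝ) : MeasurableSet {p : ℝ × ℝ | x < p.1 * p.2} :=
  measurableSet_lt measurable_const (measurable_fst.mul measurable_snd)

lemma MeasureTheory.measureReal_prod_apply_symm {α β : Type*} [MeasurableSpace α]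
    [MeasurableSpace β] (μ : Measure α) (ν : Measure β) [IsFiniteMeasure μ] [IsFiniteMeasure ν]
    {s : Set (α × β)} (hs : MeasurableSet s) :
    (μ.prod ν).real s = ∫ y, μ.real ((·, y) ⁻¹' s) ∂ν := by
  rw [measureReal_def, Measure.prod_apply_symm hs]
  exact (integral_toReal (measurable_measure_prodMk_right hs).aemeasurable
    (ae_of_all _ fun _ => measure_lt_top _ _)).symm

section TailAsymptotics

variable {μ : Measure ℝ} {α c : ℝ}

lemma exists_rpow_mul_measureReal_Ioi_le [IsFiniteMeasure μ] (hα : 0 ≤ α)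
    (htail : Tendsto (fun x => x ^ α * μ.real (Ioi x)) atTop (𝓝 c)) :
    ∃ K, 0 ≤ K ∧ ∀ t, 0 < t → t ^ α * μ.real (Ioi t) ≤ K := by
  obtain ⟨a, ha⟩ := eventually_atTop.mp (htail.eventually (eventually_le_nhds (lt_add_one c)))
  set b := max a 0
  refine ⟨max (b ^ α * μ.real univ) (c + 1), le_max_of_le_left (by positivity), fun t ht => ?_⟩
  rcases le_or_gt b t with hbt | htb
  · exact le_max_of_le_right (ha t (le_of_max_le_left hbt))
  · exact le_max_of_le_left <| mul_le_mul (Real.rpow_le_rpow ht.le htb.le hα)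
      (measureReal_mono (subset_univ _)) measureReal_nonneg (by positivity)

lemma rpow_mul_measureReal_lt_mul {x y : ℝ} (hx : 0 ≤ x) (hy : 0 < y) :
    x ^ α * μ.real {r | x < r * y} = y ^ α * ((x / y) ^ α * μ.real (Ioi (x / y))) := by
  have hset : {r | x < r * y} = Ioi (x / y) := by
    ext r
    simp [div_lt_iff₀ hy]
  rw [hset, Real.div_rpow hx hy.le]
  field_simp

lemma tendsto_rpow_mul_measureReal_lt_mul {y : ℝ} (hy : 0 < y)
    (htail : Tendsto (fun x => x ^ α * μ.real (Ioi x)) atTop (𝓝 c)) :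
    Tendsto (fun x => x ^ α * μ.real {r | x < r * y}) atTop (𝓝 (c * y ^ α)) := by
  rw [mul_comm c]
  refine ((htail.comp (tendsto_id.atTop_div_const hy)).const_mul (y ^ α)).congr' ?_
  filter_upwards [eventually_ge_atTop 0] with x hx
  exact (rpow_mul_measureReal_lt_mul hx hy).symm

theorem tendsto_rpow_mul_measureReal_prod_lt_mul {ν : Measure ℝ} [IsFiniteMeasure μ]
    [IsFiniteMeasure ν] {M : ℝ} (hα : 0 ≤ α) (hν : ∀ᵐ y ∂ν, 0 < y ∧ y ≤ M)
    (htail : Tendsto (fun x => x ^ α * μ.real (Ioi x)) atTop (𝓝 c)) :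
    Tendsto (fun x => x ^ α * (μ.prod ν).real {p | x < p.1 * p.2}) atTop
      (𝓝 (c * ∫ y, y ^ α ∂ν)) := by
  obtain ⟨K, hK0, hK⟩ := exists_rpow_mul_measureReal_Ioi_le hα htail
  simp_rw [measureReal_prod_apply_symm μ ν (measurableSet_lt_fst_mul_snd _), preimage_ofPred_eq,
    ← integral_const_mul]
  have hmeas (x : ℝ) : Measurable fun y => μ {r | x < r * y} :=
    measurable_measure_prodMk_right (measurableSet_lt_fst_mul_snd x)
  refine tendsto_integral_filter_of_dominated_convergence (fun _ => M ^ α * K)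
    (Eventually.of_forall fun x => ((hmeas x).ennreal_toReal.const_mul _).aestronglyMeasurable)
    ?_ (integrable_const _) ?_
  · filter_upwards [eventually_gt_atTop 0] with x hx
    filter_upwards [hν] with y ⟨hy0, hyM⟩
    rw [Real.norm_of_nonneg (by positivity), rpow_mul_measureReal_lt_mul hx.le hy0]
    calc y ^ α * ((x / y) ^ α * μ.real (Ioi (x / y))) ≤ y ^ α * K := by
          gcongr
          exact hK _ (div_pos hx hy0)
      _ ≤ M ^ α * K := by gcongr
  · filter_upwards [hν] with y hy
    exact tendsto_rpow_mul_measureReal_lt_mul hy.1 htail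

end TailAsymptotics

theorem stmt_4_general {Ω : Type*} [MeasurableSpace Ω] (P : Measure Ω) [IsProbabilityMeasure P]
    (R Y : Ω → ℝ) (hRm : Measurable R) (hYm : Measurable Y)
    (hInd : ProbabilityTheory.IndepFun R Y P)
    (M : ℝ) (hY : ∀ᵐ ω ∂P, 0 < Y ω ∧ Y ω ≤ M)
    (α c : ℝ) (hα : 0 < α)
    (htail : Filter.Tendsto (fun x : ℝ => x ^ α * (P {ω | x < R ω}).toReal)
      Filter.atTop (nhds c)) :
    Filter.Tendsto (fun x : ℝ => x ^ α * (P {ω | x < R ω * Y ω}).toReal)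
      Filter.atTop (nhds (c * ∫ ω, Y ω ^ α ∂P)) := by
  have hν : ∀ᵐ y ∂P.map Y, 0 < y ∧ y ≤ M :=
    (ae_map_iff hYm.aemeasurable (measurableSet_Ioc (a := 0) (b := M))).mpr hY
  have hlaw_R : ∀ x, (P.map R).real (Ioi x) = (P {ω | x < R ω}).toReal := fun x =>
    map_measureReal_apply hRm measurableSet_Ioi
  have hlaw_RY : ∀ x, ((P.map R).prod (P.map Y)).real {p | x < p.1 * p.2}
      = (P {ω | x < R ω * Y ω}).toReal := fun x => by
    rw [← (ProbabilityTheory.indepFun_iff_map_prod_eq_prod_map_map hRm.aemeasurable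
      hYm.aemeasurable).mp hInd, map_measureReal_apply (hRm.prodMk hYm)
      (measurableSet_lt_fst_mul_snd x)]
    rfl
  have hmoment : ∫ y, y ^ α ∂P.map Y = ∫ ω, Y ω ^ α ∂P :=
    integral_map hYm.aemeasurable (Real.continuous_rpow_const hα.le).aestronglyMeasurable
  simp_rw [← hlaw_R] at htail
  simpa only [hlaw_RY, hmoment] using
    tendsto_rpow_mul_measureReal_prod_lt_mul hα.le hν htail

/-- Breiman's lemma with a bounded positive independent factor:
if `x^α P(R > x) → c` then `x^α P(RY > x) → c E[Y^α]`. -/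
theorem stmt_4 {Ω : Type*} [MeasurableSpace Ω] (P : Measure Ω) [IsProbabilityMeasure P]
    (R Y : Ω → ℝ) (hRm : Measurable R) (hYm : Measurable Y)
    (hInd : ProbabilityTheory.IndepFun R Y P)
    (hR0 : ∀ᵐ ω ∂P, 0 ≤ R ω)
    (M : ℝ) (hM : 0 < M) (hY : ∀ᵐ ω ∂P, 0 < Y ω ∧ Y ω ≤ M)
    (α c : ℝ) (hα : 0 < α) (hc : 0 < c)
    (htail : Filter.Tendsto (fun x : ℝ => x ^ α * (P {ω | x < R ω}).toReal)
      Filter.atTop (nhds c)) :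
    Filter.Tendsto (fun x : ℝ => x ^ α * (P {ω | x < R ω * Y ω}).toReal)
      Filter.atTop (nhds (c * ∫ ω, Y ω ^ α ∂P)) :=
  stmt_4_general P R Y hRm hYm hInd M hY α c hα htail
end

section
/- Adopt the randomly homothetic grain setup: (Ω, 𝒜, P) is a probability space, ν ≥ 1 an integer, S ⊆ Ω × ℝ^ν is measurable for the product of 𝒜 and the Borel σ-algebra with every section Ξ⁰_ω := {s : (ω, s) ∈ S} contained in the closed Euclidean unit ball of ℝ^ν, R : Ω → (0, ∞) is measurable, and Ξ_ω := R(ω)^{1/ν} · Ξ⁰_ω := {R(ω)^{1/ν} s : s ∈ Ξ⁰_ω}. Suppose α > 1 and sup_{x ≥ 1} x^α P(R > x) < ∞. Then there is a constant C such that for every λ ≥ 1, E[Leb_ν(Ξ_ω ∩ {t ∈ ℝ^ν : |t| > λ})] ≤ C λ^{−ν(α−1)}. In particular, if 1 < α < 2 then E[Leb_ν(Ξ_ω ∩ {t : |t| > λ})] = o(λ^{ν(1−α)/α}) as λ → ∞. -/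
open MeasureTheory Set
open scoped ENNReal Pointwise

private lemma tail_measure_bound {Ω : Type*} [MeasurableSpace Ω] (P : Measure Ω)
    [IsProbabilityMeasure P] (R : Ω → ℝ) (α K : ℝ)
    (hsup : ∀ x : ℝ, 1 ≤ x → x ^ α * (P {ω | x < R ω}).toReal ≤ K)
    {y : ℝ} (hy : 1 ≤ y) : P {ω | y < R ω} ≤ ENNReal.ofReal (K * y ^ (-α)) := by
  have hy0 : 0 < y := lt_of_lt_of_le one_pos hy
  have hpow : 0 < y ^ α := Real.rpow_pos_of_pos hy0 α
  rw [← ENNReal.ofReal_toReal (measure_ne_top P _)]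
  apply ENNReal.ofReal_le_ofReal
  rw [Real.rpow_neg hy0.le, ← div_eq_mul_inv]
  rw [le_div_iff₀ hpow, mul_comm]
  exact hsup y hy

private lemma tail_lintegral_bound {Ω : Type*} [MeasurableSpace Ω] (P : Measure Ω)
    [IsProbabilityMeasure P] (R : Ω → ℝ) (hRm : Measurable R) (hR : ∀ ω, 0 < R ω)
    (α K : ℝ) (hα : 1 < α) (hK : 0 ≤ K)
    (hsup : ∀ x : ℝ, 1 ≤ x → x ^ α * (P {ω | x < R ω}).toReal ≤ K)
    {x : ℝ} (hx : 1 ≤ x) :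
    ∫⁻ ω, ENNReal.ofReal ({ω | x < R ω}.indicator R ω) ∂P
      ≤ ENNReal.ofReal (K * (1 + (α - 1)⁻¹) * x ^ (1 - α)) := by
  have hx0 : 0 < x := lt_of_lt_of_le one_pos hx
  have hmset : MeasurableSet {ω | x < R ω} := measurableSet_lt measurable_const hRm
  have f_nn : 0 ≤ᵐ[P] {ω | x < R ω}.indicator R :=
    Filter.Eventually.of_forall (indicator_nonneg (fun ω _ => (hR ω).le))
  have f_mble : AEMeasurable ({ω | x < R ω}.indicator R) P :=
    (hRm.indicator hmset).aemeasurable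
  rw [lintegral_eq_lintegral_meas_lt P f_nn f_mble]
  have hxpow_nn : 0 ≤ x ^ (-α) := (Real.rpow_pos_of_pos hx0 _).le
  have hx1a : x ^ (-α) * x = x ^ (1 - α) := by
    rw [show (1 - α : ℝ) = -α + 1 by ring, Real.rpow_add hx0, Real.rpow_one]
  -- pointwise tail bound
  have key : ∀ t : ℝ, 0 < t →
      P {a | t < {ω | x < R ω}.indicator R a} ≤ ENNReal.ofReal (K * (max x t) ^ (-α)) := by
    intro t ht
    refine le_trans (measure_mono ?_) (tail_measure_bound P R α K hsup (le_max_of_le_left hx))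
    intro a ha
    simp only [mem_setOf_eq, indicator] at ha ⊢
    by_cases hxa : x < R a
    · rw [if_pos hxa] at ha
      exact max_lt_iff.mpr ⟨hxa, ha⟩
    · rw [if_neg hxa] at ha; linarith
  calc ∫⁻ t in Ioi (0:ℝ), P {a | t < {ω | x < R ω}.indicator R a}
      = ∫⁻ t in Ioc (0:ℝ) x ∪ Ioi x, P {a | t < {ω | x < R ω}.indicator R a} := by
        rw [Ioc_union_Ioi_eq_Ioi hx0.le]
    _ ≤ (∫⁻ t in Ioc (0:ℝ) x, P {a | t < {ω | x < R ω}.indicator R a})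
        + ∫⁻ t in Ioi x, P {a | t < {ω | x < R ω}.indicator R a} :=
        lintegral_union_le _ _ _
    _ ≤ ENNReal.ofReal (K * x ^ (1 - α)) + ENNReal.ofReal (K * x ^ (1 - α) * (α - 1)⁻¹) := by
        gcongr
        · calc ∫⁻ t in Ioc (0:ℝ) x, P {a | t < {ω | x < R ω}.indicator R a}
              ≤ ∫⁻ _ in Ioc (0:ℝ) x, ENNReal.ofReal (K * x ^ (-α)) := by
                refine setLIntegral_mono' measurableSet_Ioc (fun t ht => ?_)
                have := key t ht.1
                rwa [max_eq_left ht.2] at this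
            _ = ENNReal.ofReal (K * x ^ (-α)) * volume (Ioc (0:ℝ) x) :=
                setLIntegral_const _ _
            _ = ENNReal.ofReal (K * x ^ (-α) * x) := by
                rw [Real.volume_Ioc, sub_zero,
                  ← ENNReal.ofReal_mul (mul_nonneg hK hxpow_nn)]
            _ = ENNReal.ofReal (K * x ^ (1 - α)) := by rw [mul_assoc, hx1a]
        · have hint : IntegrableOn (fun t : ℝ => K * t ^ (-α)) (Ioi x) volume :=
            (integrableOn_Ioi_rpow_of_lt (by linarith) hx0).const_mul K
          calc ∫⁻ t in Ioi x, P {a | t < {ω | x < R ω}.indicator R a}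
              ≤ ∫⁻ t in Ioi x, ENNReal.ofReal (K * t ^ (-α)) := by
                refine setLIntegral_mono' measurableSet_Ioi (fun t ht => ?_)
                have := key t (lt_of_lt_of_le hx0 (le_of_lt ht))
                rwa [max_eq_right (le_of_lt ht)] at this
            _ = ENNReal.ofReal (∫ t in Ioi x, K * t ^ (-α)) := by
                refine (ofReal_integral_eq_lintegral_ofReal hint ?_).symm
                refine (ae_restrict_iff' measurableSet_Ioi).2
                  (Filter.Eventually.of_forall (fun t ht => ?_))
                exact mul_nonneg hK
                  (Real.rpow_pos_of_pos (lt_trans hx0 ht) _).le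
            _ = ENNReal.ofReal (K * x ^ (1 - α) * (α - 1)⁻¹) := by
                rw [integral_const_mul, integral_Ioi_rpow_of_lt (by linarith) hx0]
                congr 1
                rw [show (-α + 1 : ℝ) = 1 - α by ring, div_eq_mul_inv,
                  show ((1:ℝ) - α)⁻¹ = -((α - 1)⁻¹) by
                    rw [show (1 - α : ℝ) = -(α - 1) by ring, inv_neg]]
                ring
    _ = ENNReal.ofReal (K * (1 + (α - 1)⁻¹) * x ^ (1 - α)) := by
        rw [← ENNReal.ofReal_add
          (mul_nonneg hK (Real.rpow_pos_of_pos hx0 _).le)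
          (mul_nonneg (mul_nonneg hK (Real.rpow_pos_of_pos hx0 _).le)
            (inv_nonneg.2 (by linarith)))]
        congr 1
        ring

/-- for a randomly homothetic grain `Ξ = R^{1/ν} Ξ⁰` with `Ξ⁰` in the unit
ball and `sup_{x≥1} x^α P(R>x) < ∞`, `α > 1`: there is `C` with
`E[Leb_ν(Ξ ∩ {|t| > λ})] ≤ C λ^{−ν(α−1)}` for all `λ ≥ 1`; in particular if `α < 2`
then `E[Leb_ν(Ξ ∩ {|t| > λ})] = o(λ^{ν(1−α)/α})`. -/
theorem stmt_5 {Ω : Type*} [MeasurableSpace Ω] (P : Measure Ω) [IsProbabilityMeasure P]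
    (ν : ℕ) (hν : 1 ≤ ν)
    (S : Set (Ω × EuclideanSpace ℝ (Fin ν))) (hS : MeasurableSet S)
    (hSball : ∀ ω s, (ω, s) ∈ S → ‖s‖ ≤ 1)
    (R : Ω → ℝ) (hRm : Measurable R) (hR : ∀ ω, 0 < R ω)
    (α : ℝ) (hα : 1 < α)
    (hsup : ∃ K : ℝ, ∀ x : ℝ, 1 ≤ x → x ^ α * (P {ω | x < R ω}).toReal ≤ K) :
    (∃ C : ℝ, 0 ≤ C ∧ ∀ lam : ℝ, 1 ≤ lam →
        ∫⁻ ω, volume ((R ω ^ ((ν:ℝ)⁻¹) • {s | (ω, s) ∈ S})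
            ∩ {t : EuclideanSpace ℝ (Fin ν) | lam < ‖t‖}) ∂P
          ≤ ENNReal.ofReal (C * lam ^ (-((ν:ℝ) * (α - 1))))) ∧
    (α < 2 → Filter.Tendsto
      (fun lam : ℝ => lam ^ ((ν:ℝ) * (α - 1) / α) *
        (∫⁻ ω, volume ((R ω ^ ((ν:ℝ)⁻¹) • {s | (ω, s) ∈ S})
            ∩ {t : EuclideanSpace ℝ (Fin ν) | lam < ‖t‖}) ∂P).toReal)
      Filter.atTop (nhds 0)) := by
  obtain ⟨K, hsup⟩ := hsup
  have hK : 0 ≤ K := le_trans (by positivity) (hsup 1 le_rfl)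
  have hνR : ((ν:ℝ)) ≠ 0 := Nat.cast_ne_zero.2 (by omega)
  set Vb : ℝ≥0∞ := volume (Metric.ball (0 : EuclideanSpace ℝ (Fin ν)) 1) with hVb
  have hVb_ne : Vb ≠ ⊤ := (Metric.isBounded_ball.measure_lt_top).ne
  set C : ℝ := K * (1 + (α - 1)⁻¹) * Vb.toReal with hC
  have hK' : 0 ≤ K * (1 + (α - 1)⁻¹) := by
    have : (0:ℝ) ≤ (α - 1)⁻¹ := inv_nonneg.2 (by linarith)
    exact mul_nonneg hK (by linarith)
  have hC0 : 0 ≤ C := mul_nonneg hK' ENNReal.toReal_nonneg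
  have main : ∀ lam : ℝ, 1 ≤ lam →
      ∫⁻ ω, volume ((R ω ^ ((ν:ℝ)⁻¹) • {s | (ω, s) ∈ S})
          ∩ {t : EuclideanSpace ℝ (Fin ν) | lam < ‖t‖}) ∂P
        ≤ ENNReal.ofReal (C * lam ^ (-((ν:ℝ) * (α - 1)))) := by
    intro lam hlam
    have hlam0 : 0 < lam := lt_of_lt_of_le one_pos hlam
    set x : ℝ := lam ^ ν with hxdef
    have hx1 : 1 ≤ x := one_le_pow₀ hlam
    have ptwise : ∀ ω, volume ((R ω ^ ((ν:ℝ)⁻¹) • {s | (ω, s) ∈ S})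
        ∩ {t : EuclideanSpace ℝ (Fin ν) | lam < ‖t‖})
        ≤ ENNReal.ofReal ({ω | x < R ω}.indicator R ω) * Vb := by
      intro ω
      set r : ℝ := R ω ^ ((ν:ℝ)⁻¹) with hrdef
      have hr0 : 0 < r := Real.rpow_pos_of_pos (hR ω) _
      have hrν : r ^ ν = R ω := by
        rw [hrdef, ← Real.rpow_natCast (R ω ^ ((ν:ℝ)⁻¹)) ν, ← Real.rpow_mul (hR ω).le,
          inv_mul_cancel₀ hνR, Real.rpow_one]
      have hnorm : ∀ s : EuclideanSpace ℝ (Fin ν), s ∈ {s | (ω, s) ∈ S} → ‖r • s‖ ≤ r := by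
        intro s hs
        rw [norm_smul, Real.norm_eq_abs, abs_of_pos hr0]
        calc r * ‖s‖ ≤ r * 1 := mul_le_mul_of_nonneg_left (hSball ω s hs) hr0.le
          _ = r := mul_one r
      by_cases hcase : x < R ω
      · rw [indicator_of_mem (show ω ∈ {ω' | x < R ω'} from hcase) R]
        have hsubball : (r • {s | (ω, s) ∈ S}) ∩ {t : EuclideanSpace ℝ (Fin ν) | lam < ‖t‖}
            ⊆ Metric.closedBall 0 r := by
          rintro t ⟨⟨s, hs, rfl⟩, -⟩
          rw [Metric.mem_closedBall, dist_zero_right]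
          exact hnorm s hs
        refine le_trans (measure_mono hsubball) ?_
        rw [MeasureTheory.Measure.addHaar_closedBall (μ := volume) 0 hr0.le,
          finrank_euclideanSpace_fin, hrν]
      · have hrlam : r ≤ lam := by
          have h1 : r ^ ν ≤ lam ^ ν := by rw [hrν]; exact le_of_not_gt hcase
          exact (pow_le_pow_iff_left₀ hr0.le hlam0.le (by omega)).1 h1
        have hempty : (r • {s | (ω, s) ∈ S}) ∩ {t : EuclideanSpace ℝ (Fin ν) | lam < ‖t‖}
            = ∅ := by
          ext t
          simp only [mem_inter_iff, mem_empty_iff_false, iff_false, not_and, mem_setOf_eq]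
          rintro ⟨s, hs, rfl⟩
          exact not_lt.2 (le_trans (hnorm s hs) hrlam)
        rw [hempty, measure_empty]
        exact zero_le
    calc ∫⁻ ω, volume ((R ω ^ ((ν:ℝ)⁻¹) • {s | (ω, s) ∈ S})
          ∩ {t : EuclideanSpace ℝ (Fin ν) | lam < ‖t‖}) ∂P
        ≤ ∫⁻ ω, ENNReal.ofReal ({ω | x < R ω}.indicator R ω) * Vb ∂P := lintegral_mono ptwise
      _ = (∫⁻ ω, ENNReal.ofReal ({ω | x < R ω}.indicator R ω) ∂P) * Vb :=
          lintegral_mul_const _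
            ((hRm.indicator (measurableSet_lt measurable_const hRm)).ennreal_ofReal)
      _ ≤ ENNReal.ofReal (K * (1 + (α - 1)⁻¹) * x ^ (1 - α)) * Vb :=
          mul_le_mul_left (tail_lintegral_bound P R hRm hR α K hα hK hsup hx1) Vb
      _ = ENNReal.ofReal (C * lam ^ (-((ν:ℝ) * (α - 1)))) := by
          rw [← ENNReal.ofReal_toReal hVb_ne,
            ← ENNReal.ofReal_mul
              (mul_nonneg hK' (Real.rpow_pos_of_pos (lt_of_lt_of_le one_pos hx1) _).le)]
          congr 1
          have hxpow : x ^ (1 - α) = lam ^ (-((ν:ℝ) * (α - 1))) := by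
            rw [hxdef, ← Real.rpow_natCast lam ν, ← Real.rpow_mul hlam0.le]
            congr 1; ring
          rw [hxpow, hC]; ring
  refine ⟨⟨C, hC0, main⟩, fun _ => ?_⟩
  have hν1 : (1:ℝ) ≤ (ν:ℝ) := Nat.one_le_cast.2 hν
  have hy : 0 < (ν:ℝ) * (α - 1) - (ν:ℝ) * (α - 1) / α := by
    have h1 : 0 < (ν:ℝ) * (α - 1) := by nlinarith
    have h2 : (ν:ℝ) * (α - 1) / α < (ν:ℝ) * (α - 1) := by
      rw [div_lt_iff₀ (by linarith)]; nlinarith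
    linarith
  refine squeeze_zero' ?_ ?_
    (g := fun lam : ℝ => C * lam ^ (-((ν:ℝ) * (α - 1) - (ν:ℝ) * (α - 1) / α))) ?_
  · filter_upwards [Filter.eventually_ge_atTop (1:ℝ)] with lam hlam
    exact mul_nonneg (Real.rpow_nonneg (by linarith) _) ENNReal.toReal_nonneg
  · filter_upwards [Filter.eventually_ge_atTop (1:ℝ)] with lam hlam
    have hlam0 : 0 < lam := lt_of_lt_of_le one_pos hlam
    have htoReal : (∫⁻ ω, volume ((R ω ^ ((ν:ℝ)⁻¹) • {s | (ω, s) ∈ S})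
          ∩ {t : EuclideanSpace ℝ (Fin ν) | lam < ‖t‖}) ∂P).toReal
        ≤ C * lam ^ (-((ν:ℝ) * (α - 1))) :=
      ENNReal.toReal_le_of_le_ofReal
        (mul_nonneg hC0 (Real.rpow_nonneg hlam0.le _)) (main lam hlam)
    calc lam ^ ((ν:ℝ) * (α - 1) / α) * (∫⁻ ω, volume ((R ω ^ ((ν:ℝ)⁻¹) • {s | (ω, s) ∈ S})
          ∩ {t : EuclideanSpace ℝ (Fin ν) | lam < ‖t‖}) ∂P).toReal
        ≤ lam ^ ((ν:ℝ) * (α - 1) / α) * (C * lam ^ (-((ν:ℝ) * (α - 1)))) :=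
          mul_le_mul_of_nonneg_left htoReal (Real.rpow_nonneg hlam0.le _)
      _ = C * (lam ^ ((ν:ℝ) * (α - 1) / α) * lam ^ (-((ν:ℝ) * (α - 1)))) := by ring
      _ = C * lam ^ (-((ν:ℝ) * (α - 1) - (ν:ℝ) * (α - 1) / α)) := by
          rw [← Real.rpow_add hlam0]
          congr 1; ring
  · simpa using (tendsto_rpow_neg_atTop hy).const_mul C
end

section
/- Adopt the randomly homothetic grain setup: (Ω, 𝒜, P) is a probability space, ν ≥ 1 an integer, S ⊆ Ω × ℝ^ν is measurable for the product of 𝒜 and the Borel σ-algebra with every section Ξ⁰_ω := {s : (ω, s) ∈ S} contained in the closed Euclidean unit ball of ℝ^ν, R : Ω → (0, ∞) is measurable, and Ξ_ω := R(ω)^{1/ν} · Ξ⁰_ω := {R(ω)^{1/ν} s : s ∈ Ξ⁰_ω}. Suppose α ∈ (1, 2) and sup_{x ≥ 1} x^α P(R > x) < ∞. Then there exist constants C > 0 and T > 0 such that for every t ∈ ℝ^ν with |t| ≥ T, E[Leb_ν(Ξ_ω ∩ (Ξ_ω − t))] ≤ C |t|^{−ν(α−1)}, where Ξ_ω − t :=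 {s : s + t ∈ Ξ_ω}. -/
open MeasureTheory Set
open scoped ENNReal Pointwise

/-- covariance decay for the randomly homothetic grain: there are
`C > 0`, `T > 0` with `E[Leb_ν(Ξ ∩ (Ξ − t))] ≤ C |t|^{−ν(α−1)}` for `|t| ≥ T`. -/
theorem stmt_6 {Ω : Type*} [MeasurableSpace Ω] (P : Measure Ω) [IsProbabilityMeasure P]
    (ν : ℕ) (hν : 1 ≤ ν)
    (S : Set (Ω × EuclideanSpace ℝ (Fin ν))) (hS : MeasurableSet S)
    (hSball : ∀ ω s, (ω, s) ∈ S → ‖s‖ ≤ 1)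
    (R : Ω → ℝ) (hRm : Measurable R) (hR : ∀ ω, 0 < R ω)
    (α : ℝ) (hα1 : 1 < α) (hα2 : α < 2)
    (hsup : ∃ K : ℝ, ∀ x : ℝ, 1 ≤ x → x ^ α * (P {ω | x < R ω}).toReal ≤ K) :
    ∃ C > (0:ℝ), ∃ T > (0:ℝ), ∀ t : EuclideanSpace ℝ (Fin ν), T ≤ ‖t‖ →
      ∫⁻ ω, volume ((R ω ^ ((ν:ℝ)⁻¹) • {s | (ω, s) ∈ S})
          ∩ {s : EuclideanSpace ℝ (Fin ν) |
              s + t ∈ R ω ^ ((ν:ℝ)⁻¹) • {s' | (ω, s') ∈ S}}) ∂P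
        ≤ ENNReal.ofReal (C * ‖t‖ ^ (-((ν:ℝ) * (α - 1)))) := by
  obtain ⟨K, hK⟩ := hsup
  have hK0 : 0 ≤ K := by
    have := hK 1 le_rfl
    rw [Real.one_rpow, one_mul] at this
    exact le_trans ENNReal.toReal_nonneg this
  have hα1' : (0:ℝ) < α - 1 := by linarith
  set Vb : ℝ≥0∞ := volume (Metric.ball (0 : EuclideanSpace ℝ (Fin ν)) 1) with hVbdef
  have hVbfin : Vb ≠ ⊤ := measure_ball_lt_top.ne
  set c2 : ℝ := ((2:ℝ) ^ (ν+1)) ^ (α - 1) with hc2def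
  have hc2pos : 0 < c2 := Real.rpow_pos_of_pos (by positivity) _
  set D : ℝ := Vb.toReal * (K * (1 + (α-1)⁻¹)) * c2 with hDdef
  have hD0 : 0 ≤ D := by
    have h1 : (0:ℝ) ≤ 1 + (α-1)⁻¹ := by positivity
    have := ENNReal.toReal_nonneg (a := Vb)
    positivity
  refine ⟨D + 1, by linarith, 4, by norm_num, ?_⟩
  intro t ht
  set u : ℝ := ‖t‖ with hudef
  have hu4 : (4:ℝ) ≤ u := ht
  have hu0 : (0:ℝ) < u := by linarith
  set x0 : ℝ := (u/2)^ν with hx0def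
  have hx02 : (2:ℝ) ≤ x0 := by
    calc (2:ℝ) = 2^1 := (pow_one 2).symm
      _ ≤ 2^ν := pow_le_pow_right₀ one_le_two hν
      _ ≤ (u/2)^ν := by
          apply pow_le_pow_left₀ (by norm_num)
          linarith
  set m : ℝ := x0 / 2 with hmdef
  have hm1 : (1:ℝ) ≤ m := by rw [hmdef]; linarith
  have hm0 : (0:ℝ) < m := by linarith
  set g : Ω → ℝ := fun ω => if x0 ≤ R ω then R ω else 0 with hgdef
  have hgm : Measurable g := Measurable.ite (measurableSet_le measurable_const hRm) hRm
    measurable_const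
  have hg0 : ∀ ω, 0 ≤ g ω := by
    intro ω; rw [hgdef]; dsimp only; split_ifs
    · exact (hR ω).le
    · exact le_rfl
  -- pointwise bound
  have hpt : ∀ ω, volume ((R ω ^ ((ν:ℝ)⁻¹) • {s | (ω, s) ∈ S})
      ∩ {s : EuclideanSpace ℝ (Fin ν) |
          s + t ∈ R ω ^ ((ν:ℝ)⁻¹) • {s' | (ω, s') ∈ S}})
      ≤ ENNReal.ofReal (g ω) * Vb := by
    intro ω
    set r : ℝ := R ω ^ ((ν:ℝ)⁻¹) with hrdef
    have hr0 : 0 < r := Real.rpow_pos_of_pos (hR ω) _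
    have hνne : (ν:ℝ) ≠ 0 := Nat.cast_ne_zero.mpr (by omega)
    have hrν : r ^ ν = R ω := by
      rw [hrdef, ← Real.rpow_natCast (R ω ^ ((ν:ℝ)⁻¹)) ν, ← Real.rpow_mul (hR ω).le,
        inv_mul_cancel₀ hνne, Real.rpow_one]
    rcases eq_empty_or_nonempty ((r • {s | (ω, s) ∈ S})
        ∩ {s : EuclideanSpace ℝ (Fin ν) | s + t ∈ r • {s' | (ω, s') ∈ S}}) with hA | hA
    · rw [hA]; simp
    · obtain ⟨s, hs1, hs2⟩ := hA
      have hnorm : ∀ z : EuclideanSpace ℝ (Fin ν), z ∈ r • {s' | (ω, s') ∈ S} → ‖z‖ ≤ r := by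
        intro z hz
        obtain ⟨z', hz', rfl⟩ := hz
        rw [norm_smul, Real.norm_eq_abs, abs_of_pos hr0]
        calc r * ‖z'‖ ≤ r * 1 := by
              exact mul_le_mul_of_nonneg_left (hSball ω z' hz') hr0.le
          _ = r := mul_one r
      have hs1' : ‖s‖ ≤ r := hnorm s hs1
      have hs2' : ‖s + t‖ ≤ r := hnorm _ hs2
      have htr : u ≤ 2 * r := by
        have : ‖t‖ = ‖(s + t) - s‖ := by rw [add_sub_cancel_left]
        rw [hudef, this]
        calc ‖(s + t) - s‖ ≤ ‖s + t‖ + ‖s‖ := norm_sub_le _ _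
          _ ≤ 2 * r := by linarith
      have hx0R : x0 ≤ R ω := by
        rw [hx0def, ← hrν]
        apply pow_le_pow_left₀ (by linarith)
        linarith
      have hgR : g ω = R ω := by rw [hgdef]; simp [hx0R]
      calc volume ((r • {s | (ω, s) ∈ S})
          ∩ {s : EuclideanSpace ℝ (Fin ν) | s + t ∈ r • {s' | (ω, s') ∈ S}})
          ≤ volume (Metric.closedBall (0 : EuclideanSpace ℝ (Fin ν)) r) := by
            apply measure_mono
            intro z hz
            rw [Metric.mem_closedBall, dist_zero_right]
            exact hnorm z hz.1
        _ = ENNReal.ofReal (r ^ Module.finrank ℝ (EuclideanSpace ℝ (Fin ν))) * Vb :=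
            Measure.addHaar_closedBall _ _ hr0.le
        _ = ENNReal.ofReal (g ω) * Vb := by rw [finrank_euclideanSpace_fin, hrν, hgR]
  -- tail bound helper
  have htail : ∀ x : ℝ, 1 ≤ x → P {ω | x < R ω} ≤ ENNReal.ofReal (K * x ^ (-α)) := by
    intro x hx
    have hxpos : (0:ℝ) < x := by linarith
    have hxa : (0:ℝ) < x ^ α := Real.rpow_pos_of_pos hxpos _
    have h1 := hK x hx
    have h2 : (P {ω | x < R ω}).toReal ≤ K * x ^ (-α) := by
      rw [Real.rpow_neg hxpos.le, ← div_eq_mul_inv, le_div_iff₀ hxa]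
      linarith [h1, mul_comm ((P {ω | x < R ω}).toReal) (x ^ α)]
    exact (ENNReal.le_ofReal_iff_toReal_le (measure_ne_top P _)
      (by positivity)).mpr h2
  -- layer cake and splitting
  have hlayer : ∫⁻ ω, ENNReal.ofReal (g ω) ∂P = ∫⁻ y in Ioi (0:ℝ), P {ω | y < g ω} :=
    lintegral_eq_lintegral_meas_lt P (Filter.Eventually.of_forall hg0) hgm.aemeasurable
  have hsub1 : ∀ y : ℝ, 0 < y → {ω | y < g ω} ⊆ {ω | m < R ω} := by
    intro y hy ω hω
    have hgω : 0 < g ω := lt_trans hy hω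
    simp only [hgdef] at hgω
    by_cases h : x0 ≤ R ω
    · show m < R ω; linarith
    · simp only [h, if_false] at hgω; linarith
  have hsub2 : ∀ y : ℝ, 0 < y → {ω | y < g ω} ⊆ {ω | y < R ω} := by
    intro y hy ω hω
    have hgω : 0 < g ω := lt_trans hy hω
    have hgω' : y < g ω := hω
    simp only [hgdef] at hgω hgω'
    by_cases h : x0 ≤ R ω
    · show y < R ω; simpa [h] using hgω'
    · simp only [h, if_false] at hgω; linarith
  have hpart1 : ∫⁻ y in Ioc (0:ℝ) m, P {ω | y < g ω}
      ≤ ENNReal.ofReal (K * m ^ (-α) * m) := by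
    calc ∫⁻ y in Ioc (0:ℝ) m, P {ω | y < g ω}
        ≤ ∫⁻ _ in Ioc (0:ℝ) m, ENNReal.ofReal (K * m ^ (-α)) := by
          apply setLIntegral_mono measurable_const
          intro y hy
          exact le_trans (measure_mono (hsub1 y hy.1)) (htail m hm1)
      _ = ENNReal.ofReal (K * m ^ (-α)) * volume (Ioc (0:ℝ) m) := by
          rw [setLIntegral_const]
      _ = ENNReal.ofReal (K * m ^ (-α) * m) := by
          rw [Real.volume_Ioc, ← ENNReal.ofReal_mul (by positivity)]
          norm_num
  have hpart2 : ∫⁻ y in Ioi m, P {ω | y < g ω}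
      ≤ ENNReal.ofReal (K * (m ^ ((1:ℝ) - α) / (α - 1))) := by
    have hint : IntegrableOn (fun y : ℝ => K * y ^ (-α)) (Ioi m) := by
      exact (integrableOn_Ioi_rpow_of_lt (by linarith) hm0).const_mul K
    calc ∫⁻ y in Ioi m, P {ω | y < g ω}
        ≤ ∫⁻ y in Ioi m, ENNReal.ofReal (K * y ^ (-α)) := by
          apply setLIntegral_mono (by fun_prop)
          intro y hy
          have hy1 : (1:ℝ) ≤ y := le_trans hm1 (le_of_lt hy)
          exact le_trans (measure_mono (hsub2 y (by linarith))) (htail y hy1)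
      _ = ENNReal.ofReal (∫ y in Ioi m, K * y ^ (-α)) := by
          rw [← ofReal_integral_eq_lintegral_ofReal hint
            ((ae_restrict_iff' measurableSet_Ioi).mpr (Filter.Eventually.of_forall
              fun y hy => mul_nonneg hK0 (Real.rpow_nonneg (by linarith [mem_Ioi.mp hy]) _)))]
      _ ≤ ENNReal.ofReal (K * (m ^ ((1:ℝ) - α) / (α - 1))) := by
          apply ENNReal.ofReal_le_ofReal
          rw [integral_const_mul, integral_Ioi_rpow_of_lt (by linarith) hm0]
          have : -m ^ (-α + 1) / (-α + 1) = m ^ ((1:ℝ) - α) / (α - 1) := by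
            rw [show (1:ℝ) - α = -α + 1 by ring,
              div_eq_div_iff (by linarith : (-α + 1:ℝ) ≠ 0) (by linarith : (α - 1:ℝ) ≠ 0)]
            ring
          rw [this]
  -- real algebra for the final bound
  have hm_eq : m = u ^ ν / 2 ^ (ν + 1) := by
    rw [hmdef, hx0def, div_pow, div_div, ← pow_succ]
  have hm1α : m ^ ((1:ℝ) - α) = c2 * u ^ (-((ν:ℝ) * (α - 1))) := by
    have e1 : (ν:ℝ) * (1 - α) = -((ν:ℝ) * (α - 1)) := by ring
    have e2 : -((1:ℝ) - α) = α - 1 := by ring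
    rw [hm_eq, Real.div_rpow (by positivity) (by positivity),
      ← Real.rpow_natCast u ν, ← Real.rpow_mul hu0.le, e1,
      div_eq_mul_inv, ← Real.rpow_neg (by positivity : (0:ℝ) ≤ 2 ^ (ν + 1)), e2,
      hc2def, mul_comm]
  have hma : K * m ^ (-α) * m + K * (m ^ ((1:ℝ) - α) / (α - 1))
      = K * (1 + (α - 1)⁻¹) * m ^ ((1:ℝ) - α) := by
    have h1 : m ^ (-α) * m = m ^ ((1:ℝ) - α) := by
      nth_rewrite 2 [← Real.rpow_one m]
      rw [← Real.rpow_add hm0]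
      congr 1
      ring
    rw [mul_assoc K (m ^ (-α)) m, h1]
    field_simp
  have hreal : (K * m ^ (-α) * m + K * (m ^ ((1:ℝ) - α) / (α - 1))) * Vb.toReal
      ≤ (D + 1) * u ^ (-((ν:ℝ) * (α - 1))) := by
    rw [hma, hm1α]
    have hue : (0:ℝ) ≤ u ^ (-((ν:ℝ) * (α - 1))) := Real.rpow_nonneg hu0.le _
    have : K * (1 + (α - 1)⁻¹) * (c2 * u ^ (-((ν:ℝ) * (α - 1)))) * Vb.toReal
        = D * u ^ (-((ν:ℝ) * (α - 1))) := by rw [hDdef]; ring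
    rw [this]
    exact mul_le_mul_of_nonneg_right (by linarith) hue
  -- assemble
  have ha0 : (0:ℝ) ≤ K * m ^ (-α) * m :=
    mul_nonneg (mul_nonneg hK0 (Real.rpow_nonneg hm0.le _)) hm0.le
  have hb0 : (0:ℝ) ≤ K * (m ^ ((1:ℝ) - α) / (α - 1)) :=
    mul_nonneg hK0 (div_nonneg (Real.rpow_nonneg hm0.le _) hα1'.le)
  calc ∫⁻ ω, volume ((R ω ^ ((ν:ℝ)⁻¹) • {s | (ω, s) ∈ S})
          ∩ {s : EuclideanSpace ℝ (Fin ν) |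
              s + t ∈ R ω ^ ((ν:ℝ)⁻¹) • {s' | (ω, s') ∈ S}}) ∂P
      ≤ ∫⁻ ω, ENNReal.ofReal (g ω) * Vb ∂P := lintegral_mono hpt
    _ = (∫⁻ ω, ENNReal.ofReal (g ω) ∂P) * Vb := lintegral_mul_const _ hgm.ennreal_ofReal
    _ = (∫⁻ y in Ioi (0:ℝ), P {ω | y < g ω}) * Vb := by rw [hlayer]
    _ ≤ ((∫⁻ y in Ioc (0:ℝ) m, P {ω | y < g ω})
          + ∫⁻ y in Ioi m, P {ω | y < g ω}) * Vb := by
        apply mul_le_mul_left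
        rw [← Ioc_union_Ioi_eq_Ioi hm0.le]
        exact lintegral_union_le _ _ _
    _ ≤ (ENNReal.ofReal (K * m ^ (-α) * m)
          + ENNReal.ofReal (K * (m ^ ((1:ℝ) - α) / (α - 1)))) * Vb :=
        mul_le_mul_left (add_le_add hpart1 hpart2) _
    _ = ENNReal.ofReal ((K * m ^ (-α) * m + K * (m ^ ((1:ℝ) - α) / (α - 1))) * Vb.toReal) := by
        rw [← ENNReal.ofReal_add ha0 hb0]
        conv_lhs => rw [← ENNReal.ofReal_toReal hVbfin]
        rw [← ENNReal.ofReal_mul (by linarith)]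
    _ ≤ ENNReal.ofReal ((D + 1) * u ^ (-((ν:ℝ) * (α - 1)))) :=
        ENNReal.ofReal_le_ofReal hreal
end

section
/- Let ν ≥ 1 be an integer, α ∈ (1, 2), and c_f > 0. Let f : (0, ∞) → [0, ∞) be a measurable probability density (∫₀^∞ f(r) dr = 1) with lim_{r→∞} r^{1+α} f(r) = c_f. Let G : ℝ^ν → [0, ∞) be bounded and measurable with G(t) = 0 whenever |t| ≥ 2, and G continuous on ℝ^ν ∖ {0}. Then for every z ∈ ℝ^ν with |z| = 1, the quantity ℓ(z) := c_f ∫₀^∞ G(r^{−1/ν} z) r^{−α} dr is finite, and lim_{s→∞} s^{ν(α−1)} ∫₀^∞ r · G(s r^{−1/ν} z) f(r) dr = ℓ(z). -/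
open MeasureTheory Set
open scoped ENNReal

/-- covariance asymptotics along rays for the randomly homothetic grain:
with `r^{1+α} f(r) → c_f`, `G` bounded measurable vanishing for `|t| ≥ 2` and continuous
off `0`, for each unit vector `z`: `ℓ(z) := c_f ∫₀^∞ G(r^{−1/ν} z) r^{−α} dr` is finite and
`s^{ν(α−1)} ∫₀^∞ r G(s r^{−1/ν} z) f(r) dr → ℓ(z)` as `s → ∞`. -/
theorem stmt_7 (ν : ℕ) (hν : 1 ≤ ν) (α c_f : ℝ) (hα1 : 1 < α) (hα2 : α < 2) (hcf : 0 < c_f)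
    (f : ℝ → ℝ) (hfm : Measurable f) (hf0 : ∀ r, 0 ≤ f r)
    (hf1 : ∫ r in Set.Ioi (0:ℝ), f r = 1)
    (hftail : Filter.Tendsto (fun r : ℝ => r ^ (1 + α) * f r) Filter.atTop (nhds c_f))
    (G : EuclideanSpace ℝ (Fin ν) → ℝ) (hGm : Measurable G) (hG0 : ∀ t, 0 ≤ G t)
    (M : ℝ) (hGb : ∀ t, G t ≤ M) (hGsupp : ∀ t, 2 ≤ ‖t‖ → G t = 0)
    (hGcont : ContinuousOn G {(0 : EuclideanSpace ℝ (Fin ν))}ᶜ)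
    (z : EuclideanSpace ℝ (Fin ν)) (hz : ‖z‖ = 1) :
    IntegrableOn (fun r : ℝ => G (r ^ (-(ν:ℝ)⁻¹) • z) * r ^ (-α)) (Set.Ioi 0) volume ∧
    Filter.Tendsto (fun s : ℝ => s ^ ((ν:ℝ) * (α - 1)) *
        ∫ r in Set.Ioi (0:ℝ), r * G ((s * r ^ (-(ν:ℝ)⁻¹)) • z) * f r)
      Filter.atTop
      (nhds (c_f * ∫ r in Set.Ioi (0:ℝ), G (r ^ (-(ν:ℝ)⁻¹) • z) * r ^ (-α))) := by
  have hν' : (0:ℝ) < (ν:ℝ) := by exact_mod_cast hν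
  have hν1 : (1:ℝ) ≤ (ν:ℝ) := by exact_mod_cast hν
  have hM : (0:ℝ) ≤ M := le_trans (hG0 0) (hGb 0)
  set b : ℝ := (2:ℝ) ^ (-(ν:ℝ)) with hb_def
  have hb : 0 < b := Real.rpow_pos_of_pos two_pos _
  -- support fact
  have hsupp : ∀ u : ℝ, 0 < u → u ≤ b → G (u ^ (-(ν:ℝ)⁻¹) • z) = 0 := by
    intro u hu hub
    apply hGsupp
    rw [norm_smul, hz, mul_one, Real.norm_eq_abs,
      abs_of_nonneg (Real.rpow_nonneg hu.le _)]
    have h2 : (2:ℝ) = b ^ (-(ν:ℝ)⁻¹) := by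
      rw [hb_def, ← Real.rpow_mul (by norm_num)]
      rw [show -(ν:ℝ) * -(ν:ℝ)⁻¹ = 1 by field_simp, Real.rpow_one]
    rw [h2]
    exact Real.rpow_le_rpow_of_nonpos hu hub
      (neg_nonpos.mpr (inv_nonneg.mpr hν'.le))
  -- measurability
  have hψ : Measurable fun u : ℝ => G (u ^ (-(ν:ℝ)⁻¹) • z) :=
    hGm.comp ((show Measurable fun u : ℝ => u ^ (-(ν:ℝ)⁻¹) by fun_prop).smul_const z)
  have hφm : Measurable fun u : ℝ => G (u ^ (-(ν:ℝ)⁻¹) • z) * u ^ (-α) :=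
    hψ.mul (by fun_prop)
  -- Part 1: integrability
  have hint : IntegrableOn (fun r : ℝ => G (r ^ (-(ν:ℝ)⁻¹) • z) * r ^ (-α)) (Set.Ioi 0) volume := by
    rw [← Set.Ioc_union_Ioi_eq_Ioi hb.le]
    apply IntegrableOn.union
    · apply (integrableOn_zero (ε' := ℝ)).congr_fun _ measurableSet_Ioc
      intro u hu
      simp [hsupp u hu.1 hu.2]
    · apply Integrable.mono'
        ((integrableOn_Ioi_rpow_of_lt (show -α < -1 by linarith) hb).const_mul M)
        (hφm.aestronglyMeasurable.restrict)
      filter_upwards [ae_restrict_mem measurableSet_Ioi] with u hu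
      have hu0 : (0:ℝ) < u := hb.trans hu
      rw [Real.norm_of_nonneg (mul_nonneg (hG0 _) (Real.rpow_nonneg hu0.le _))]
      exact mul_le_mul_of_nonneg_right (hGb _) (Real.rpow_nonneg hu0.le _)
  refine ⟨hint, ?_⟩
  -- Part 2
  set F : ℝ → ℝ → ℝ := fun s u =>
    s ^ ((ν:ℝ) * (1 + α)) * (u * G (u ^ (-(ν:ℝ)⁻¹) • z) * f (s ^ (ν:ℝ) * u)) with hF_def
  -- change of variables identity
  have key : ∀ s : ℝ, 0 < s →
      (∫ u in Set.Ioi (0:ℝ), F s u) =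
      s ^ ((ν:ℝ) * (α - 1)) * ∫ r in Set.Ioi (0:ℝ), r * G ((s * r ^ (-(ν:ℝ)⁻¹)) • z) * f r := by
    intro s hs
    set g : ℝ → ℝ := fun r => r * G ((s * r ^ (-(ν:ℝ)⁻¹)) • z) * f r with hg_def
    have hsν : 0 < s ^ (ν:ℝ) := Real.rpow_pos_of_pos hs _
    have hcomp : (∫ u in Set.Ioi (0:ℝ), g (s ^ (ν:ℝ) * u))
        = (s ^ (ν:ℝ))⁻¹ * ∫ r in Set.Ioi (0:ℝ), g r := by
      have := integral_comp_mul_left_Ioi g 0 hsν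
      simpa [smul_eq_mul] using this
    have harg : ∀ u : ℝ, 0 < u →
        s * (s ^ (ν:ℝ) * u) ^ (-(ν:ℝ)⁻¹) = u ^ (-(ν:ℝ)⁻¹) := by
      intro u hu
      rw [Real.mul_rpow hsν.le hu.le, ← Real.rpow_mul hs.le,
        show (ν:ℝ) * -(ν:ℝ)⁻¹ = -1 by field_simp, Real.rpow_neg_one, ← mul_assoc,
        mul_inv_cancel₀ hs.ne', one_mul]
    have heq : ∀ u ∈ Set.Ioi (0:ℝ), F s u
        = (s ^ ((ν:ℝ) * (1 + α)) * (s ^ (ν:ℝ))⁻¹) * g (s ^ (ν:ℝ) * u) := by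
      intro u hu
      have hu' : (0:ℝ) < u := hu
      rw [hF_def]
      simp only [hg_def]
      rw [harg u hu']
      field_simp
    rw [setIntegral_congr_fun measurableSet_Ioi heq, integral_const_mul, hcomp, ← mul_assoc]
    congr 1
    rw [← Real.rpow_neg hs.le, ← Real.rpow_add hs, ← Real.rpow_add hs]
    congr 1
    ring
  -- tail bound
  obtain ⟨R₀, hR₀⟩ := Filter.eventually_atTop.mp (hftail.eventually_lt_const (lt_add_one c_f))
  set C : ℝ := M * (c_f + 1) with hC_def
  have hC : 0 ≤ C := mul_nonneg hM (by linarith)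
  set bound : ℝ → ℝ := (Set.Ioi b).indicator (fun u => C * u ^ (-α)) with hbound_def
  have hbound_int : Integrable bound (volume.restrict (Set.Ioi (0:ℝ))) := by
    rw [hbound_def, integrable_indicator_iff measurableSet_Ioi]
    have h1 : IntegrableOn (fun u : ℝ => C * u ^ (-α)) (Set.Ioi b) volume :=
      (integrableOn_Ioi_rpow_of_lt (show -α < -1 by linarith) hb).const_mul C
    rw [IntegrableOn, Measure.restrict_restrict measurableSet_Ioi,
      show Set.Ioi b ∩ Set.Ioi (0:ℝ) = Set.Ioi b from
        Set.inter_eq_self_of_subset_left fun x hx => hb.trans hx]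
    exact h1
  have hDCT := tendsto_integral_filter_of_dominated_convergence
      (μ := volume.restrict (Set.Ioi (0:ℝ))) (l := Filter.atTop) (F := F)
      (f := fun u => c_f * (G (u ^ (-(ν:ℝ)⁻¹) • z) * u ^ (-α))) bound
      ?meas ?bd hbound_int ?lim
  case meas =>
    apply Filter.Eventually.of_forall
    intro s
    exact (((measurable_id.mul hψ).mul (hfm.comp (measurable_const_mul _))).const_mul
      _).aestronglyMeasurable.restrict
  case bd =>
    filter_upwards [Filter.eventually_ge_atTop (max (2 * max R₀ 1) 1)] with s hs
    have hs1 : (1:ℝ) ≤ s := le_trans (le_max_right _ _) hs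
    have hs0 : (0:ℝ) < s := lt_of_lt_of_le one_pos hs1
    have hs2 : 2 * max R₀ 1 ≤ s := le_trans (le_max_left _ _) hs
    filter_upwards [ae_restrict_mem measurableSet_Ioi] with u hu
    have hu : (0:ℝ) < u := hu
    have hF0 : 0 ≤ F s u :=
      mul_nonneg (Real.rpow_nonneg hs0.le _)
        (mul_nonneg (mul_nonneg hu.le (hG0 _)) (hf0 _))
    rw [Real.norm_of_nonneg hF0]
    by_cases hub : u ≤ b
    · have : F s u = 0 := by rw [hF_def]; simp [hsupp u hu hub]
      rw [this]
      exact Set.indicator_nonneg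
        (fun x hx => mul_nonneg hC (Real.rpow_nonneg (hb.trans hx).le _)) u
    · push_neg at hub
      rw [hbound_def, Set.indicator_of_mem (show u ∈ Set.Ioi b from hub)]
      -- s^ν * u is large
      have hsν : 0 < s ^ (ν:ℝ) := Real.rpow_pos_of_pos hs0 _
      have hr : max R₀ 1 ≤ s ^ (ν:ℝ) * u := by
        have e1 : s ^ (ν:ℝ) * b = (s / 2) ^ (ν:ℝ) := by
          rw [hb_def, Real.div_rpow hs0.le (by norm_num : (0:ℝ) ≤ 2),
            Real.rpow_neg (by norm_num : (0:ℝ) ≤ 2), div_eq_mul_inv]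
        have h12 : (1:ℝ) ≤ s / 2 := by
          have : (1:ℝ) ≤ max R₀ 1 := le_max_right _ _
          linarith
        have e2 : s / 2 ≤ (s / 2) ^ (ν:ℝ) := by
          calc s / 2 = (s / 2) ^ (1:ℝ) := (Real.rpow_one _).symm
            _ ≤ (s / 2) ^ (ν:ℝ) := Real.rpow_le_rpow_of_exponent_le h12 hν1
        have e3 : max R₀ 1 ≤ s / 2 := by linarith
        calc max R₀ 1 ≤ s / 2 := e3
          _ ≤ (s / 2) ^ (ν:ℝ) := e2
          _ = s ^ (ν:ℝ) * b := e1.symm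
          _ ≤ s ^ (ν:ℝ) * u := mul_le_mul_of_nonneg_left hub.le hsν.le
      set r := s ^ (ν:ℝ) * u with hr_def
      have hrpos : 0 < r := mul_pos hsν hu
      have hfr : f r ≤ (c_f + 1) * r ^ (-(1 + α)) := by
        have h := (hR₀ r (le_trans (le_max_left _ _) hr)).le
        have hp : 0 < r ^ (1 + α) := Real.rpow_pos_of_pos hrpos _
        have h2 : f r ≤ (c_f + 1) / r ^ (1 + α) := by
          rw [le_div_iff₀ hp]
          nlinarith [h]
        calc f r ≤ (c_f + 1) / r ^ (1 + α) := h2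
          _ = (c_f + 1) * r ^ (-(1 + α)) := by
            rw [Real.rpow_neg hrpos.le, div_eq_mul_inv]
      have expand : r ^ (-(1 + α)) = (s ^ ((ν:ℝ) * (1 + α)))⁻¹ * u ^ (-(1 + α)) := by
        rw [hr_def, Real.mul_rpow hsν.le hu.le, ← Real.rpow_mul hs0.le,
          show (ν:ℝ) * -(1 + α) = -((ν:ℝ) * (1 + α)) by ring,
          Real.rpow_neg hs0.le]
      have step1 : u * G (u ^ (-(ν:ℝ)⁻¹) • z) * f r
          ≤ u * M * ((c_f + 1) * r ^ (-(1 + α))) := by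
        apply mul_le_mul (mul_le_mul_of_nonneg_left (hGb _) hu.le) hfr (hf0 _)
        exact mul_nonneg hu.le hM
      have step2 : F s u ≤ s ^ ((ν:ℝ) * (1 + α)) * (u * M * ((c_f + 1) * r ^ (-(1 + α)))) := by
        rw [hF_def]
        exact mul_le_mul_of_nonneg_left step1 (Real.rpow_nonneg hs0.le _)
      refine le_trans step2 (le_of_eq ?_)
      have hsp : s ^ ((ν:ℝ) * (1 + α)) ≠ 0 := (Real.rpow_pos_of_pos hs0 _).ne'
      have hu1 : u * u ^ (-(1 + α)) = u ^ (-α) := by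
        nth_rewrite 1 [← Real.rpow_one u]
        rw [← Real.rpow_add hu]
        congr 1
        ring
      rw [expand]
      calc s ^ ((ν:ℝ) * (1 + α)) * (u * M * ((c_f + 1) * ((s ^ ((ν:ℝ) * (1 + α)))⁻¹ * u ^ (-(1 + α)))))
          = (s ^ ((ν:ℝ) * (1 + α)) * (s ^ ((ν:ℝ) * (1 + α)))⁻¹) * (M * (c_f + 1)) *
              (u * u ^ (-(1 + α))) := by ring
        _ = C * u ^ (-α) := by rw [mul_inv_cancel₀ hsp, one_mul, hu1, hC_def]
  case lim =>
    filter_upwards [ae_restrict_mem measurableSet_Ioi] with u hu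
    have hu : (0:ℝ) < u := hu
    have h1 : Filter.Tendsto (fun s : ℝ => s ^ (ν:ℝ) * u) Filter.atTop Filter.atTop :=
      Filter.Tendsto.atTop_mul_const hu (tendsto_rpow_atTop hν')
    have h2 := hftail.comp h1
    have h3 : Filter.Tendsto
        (fun s : ℝ => (G (u ^ (-(ν:ℝ)⁻¹) • z) * u ^ (-α)) *
          ((s ^ (ν:ℝ) * u) ^ (1 + α) * f (s ^ (ν:ℝ) * u)))
        Filter.atTop (nhds ((G (u ^ (-(ν:ℝ)⁻¹) • z) * u ^ (-α)) * c_f)) := h2.const_mul _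
    have h4 : Filter.Tendsto
        (fun s : ℝ => (G (u ^ (-(ν:ℝ)⁻¹) • z) * u ^ (-α)) *
          ((s ^ (ν:ℝ) * u) ^ (1 + α) * f (s ^ (ν:ℝ) * u)))
        Filter.atTop (nhds (c_f * (G (u ^ (-(ν:ℝ)⁻¹) • z) * u ^ (-α)))) := by
      rw [show c_f * (G (u ^ (-(ν:ℝ)⁻¹) • z) * u ^ (-α))
          = (G (u ^ (-(ν:ℝ)⁻¹) • z) * u ^ (-α)) * c_f from mul_comm _ _]
      exact h3
    apply h4.congr'
    filter_upwards [Filter.eventually_gt_atTop (0:ℝ)] with s hs0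
    have hexp : (s ^ (ν:ℝ) * u) ^ (1 + α) = s ^ ((ν:ℝ) * (1 + α)) * u ^ (1 + α) := by
      rw [Real.mul_rpow (Real.rpow_nonneg hs0.le _) hu.le, ← Real.rpow_mul hs0.le]
    have hu2 : u ^ (-α) * u ^ (1 + α) = u := by
      rw [← Real.rpow_add hu, show -α + (1 + α) = 1 by ring, Real.rpow_one]
    rw [hF_def, hexp,
      show G (u ^ (-(ν:ℝ)⁻¹) • z) * u ^ (-α) *
          (s ^ ((ν:ℝ) * (1 + α)) * u ^ (1 + α) * f (s ^ (ν:ℝ) * u))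
        = s ^ ((ν:ℝ) * (1 + α)) *
          (u ^ (-α) * u ^ (1 + α) * G (u ^ (-(ν:ℝ)⁻¹) • z) * f (s ^ (ν:ℝ) * u)) from by ring,
      hu2]
  -- conclude
  have hlimval : (∫ u in Set.Ioi (0:ℝ), c_f * (G (u ^ (-(ν:ℝ)⁻¹) • z) * u ^ (-α)))
      = c_f * ∫ u in Set.Ioi (0:ℝ), G (u ^ (-(ν:ℝ)⁻¹) • z) * u ^ (-α) :=
    integral_const_mul c_f _
  rw [hlimval] at hDCT
  apply hDCT.congr'
  filter_upwards [Filter.eventually_gt_atTop (0:ℝ)] with s hs using key s hs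
end

section
/- Let ν > ν₀ ≥ 1 be integers and let m := ν − ν₀. Let g : ℝ^m → ℝ be measurable with 0 ≤ g(s) ≤ M for all s and g(s) = 0 whenever |s| ≥ 1, and let R : Ω → (0, ∞) be a random variable on a probability space (Ω, 𝒜, P) such that (ω, s) ↦ g(s·R(ω)^{−1/ν}) is jointly measurable. Then for every y > 0, ∫_{ℝ^m} P( R^{ν₀/ν} · g(s·R^{−1/ν}) > y ) ds ≤ ω_m · E[ R^{m/ν} · 1( M·R^{ν₀/ν} > y ) ], where ω_m := Leb_m(closed unit ball of ℝ^m), both sides taken in [0, ∞]. -/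
open MeasureTheory Set
open scoped ENNReal

/-- tail-integral bound for hyperplane sections:
`∫_{ℝ^m} P(R^{ν₀/ν} g(s R^{−1/ν}) > y) ds ≤ ω_m E[R^{m/ν} 1(M R^{ν₀/ν} > y)]`. -/
theorem stmt_12 {Ω : Type*} [MeasurableSpace Ω] (P : Measure Ω) [IsProbabilityMeasure P]
    (ν ν₀ : ℕ) (hν₀ : 1 ≤ ν₀) (hνν : ν₀ < ν) (m : ℕ) (hm : m = ν - ν₀)
    (g : EuclideanSpace ℝ (Fin m) → ℝ) (hgm : Measurable g)
    (M : ℝ) (hg0 : ∀ s, 0 ≤ g s) (hgM : ∀ s, g s ≤ M)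
    (hgsupp : ∀ s, 1 ≤ ‖s‖ → g s = 0)
    (R : Ω → ℝ) (hR : ∀ ω, 0 < R ω)
    (hjm : Measurable (fun p : Ω × EuclideanSpace ℝ (Fin m) =>
      g (R p.1 ^ (-(ν:ℝ)⁻¹) • p.2)))
    (y : ℝ) (hy : 0 < y) :
    ∫⁻ s : EuclideanSpace ℝ (Fin m),
        P {ω | y < R ω ^ ((ν₀:ℝ)/(ν:ℝ)) * g (R ω ^ (-(ν:ℝ)⁻¹) • s)} ∂volume
      ≤ volume (Metric.closedBall (0 : EuclideanSpace ℝ (Fin m)) 1) *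
        ∫⁻ ω, ENNReal.ofReal
          (if y < M * R ω ^ ((ν₀:ℝ)/(ν:ℝ)) then R ω ^ ((m:ℝ)/(ν:ℝ)) else 0) ∂P := by
  classical
  have hmpos : 0 < m := by omega
  have hfr : Module.finrank ℝ (EuclideanSpace ℝ (Fin m)) = m := finrank_euclideanSpace_fin
  set a : Ω → ℝ := fun ω => R ω ^ (-(ν:ℝ)⁻¹) with ha_def
  have hapos : ∀ ω, 0 < a ω := fun ω => Real.rpow_pos_of_pos (hR ω) _
  have hainv : ∀ ω, (a ω)⁻¹ = R ω ^ ((ν:ℝ)⁻¹) := by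
    intro ω
    rw [ha_def]
    simp only
    rw [Real.rpow_neg (hR ω).le, inv_inv]
  have hpow : ∀ ω, (R ω ^ ((ν:ℝ)⁻¹)) ^ (m:ℕ) = R ω ^ ((m:ℝ)/(ν:ℝ)) := by
    intro ω
    rw [← Real.rpow_natCast (R ω ^ ((ν:ℝ)⁻¹)) m, ← Real.rpow_mul (hR ω).le]
    congr 1
    field_simp
  have hνν₀nonneg : (0:ℝ) ≤ (ν₀:ℝ)/(ν:ℝ) := by positivity
  have hrppos : ∀ ω, 0 < R ω ^ ((ν₀:ℝ)/(ν:ℝ)) := fun ω => Real.rpow_pos_of_pos (hR ω) _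
  have hS₁ : MeasurableSet {p : Ω × EuclideanSpace ℝ (Fin m) |
      0 < g (R p.1 ^ (-(ν:ℝ)⁻¹) • p.2)} :=
    measurableSet_lt measurable_const hjm
  set G0 : Set (EuclideanSpace ℝ (Fin m)) := {t | 0 < g t} with hG0def
  have hWval : ∀ ω, volume ((fun s : EuclideanSpace ℝ (Fin m) => a ω • s) ⁻¹' G0)
      = ENNReal.ofReal (R ω ^ ((m:ℝ)/(ν:ℝ))) * volume G0 := by
    intro ω
    rw [Measure.addHaar_preimage_smul volume (hapos ω).ne' G0]
    rw [hfr, ← inv_pow, hainv, hpow, abs_of_pos (Real.rpow_pos_of_pos (hR ω) _)]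
  have hsub : ∀ (s : EuclideanSpace ℝ (Fin m)) ω,
      y < R ω ^ ((ν₀:ℝ)/(ν:ℝ)) * g (R ω ^ (-(ν:ℝ)⁻¹) • s) →
      0 < g (R ω ^ (-(ν:ℝ)⁻¹) • s) := by
    intro s ω h
    by_contra hle
    push_neg at hle
    have := mul_nonpos_of_nonneg_of_nonpos (hrppos ω).le hle
    linarith
  by_cases hG0 : volume G0 = 0
  · -- degenerate case: g = 0 a.e., LHS vanishes
    set T₁ : Set (EuclideanSpace ℝ (Fin m) × Ω) :=
      {q | 0 < g (R q.2 ^ (-(ν:ℝ)⁻¹) • q.1)} with hT₁def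
    have hT₁ : MeasurableSet T₁ := by
      have : Measurable fun q : EuclideanSpace ℝ (Fin m) × Ω =>
          g (R q.2 ^ (-(ν:ℝ)⁻¹) • q.1) := hjm.comp measurable_swap
      exact measurableSet_lt measurable_const this
    have hb : (∫⁻ s : EuclideanSpace ℝ (Fin m),
          P {ω | y < R ω ^ ((ν₀:ℝ)/(ν:ℝ)) * g (R ω ^ (-(ν:ℝ)⁻¹) • s)} ∂volume)
        ≤ ∫⁻ s : EuclideanSpace ℝ (Fin m), P (Prod.mk s ⁻¹' T₁) ∂volume := by
      refine lintegral_mono fun s => measure_mono fun ω hω => ?_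
      exact hsub s ω hω
    have hz : (∫⁻ s : EuclideanSpace ℝ (Fin m), P (Prod.mk s ⁻¹' T₁) ∂volume) = 0 := by
      rw [← Measure.prod_apply hT₁, Measure.prod_apply_symm hT₁]
      have h0 : ∀ ω, volume ((fun s : EuclideanSpace ℝ (Fin m) => (s, ω)) ⁻¹' T₁) = 0 := by
        intro ω
        have heq : ((fun s : EuclideanSpace ℝ (Fin m) => (s, ω)) ⁻¹' T₁)
            = (fun s : EuclideanSpace ℝ (Fin m) => a ω • s) ⁻¹' G0 := rfl
        rw [heq, hWval, hG0, mul_zero]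
      exact (lintegral_congr h0).trans lintegral_zero
    exact le_trans (hz ▸ hb) zero_le
  · -- nondegenerate case: R is measurable
    have hG0top : volume G0 ≠ ⊤ := by
      refine (lt_of_le_of_lt (measure_mono ?_) (measure_closedBall_lt_top
        (x := (0 : EuclideanSpace ℝ (Fin m))) (r := 1))).ne
      intro t ht
      rw [Metric.mem_closedBall, dist_zero_right]
      by_contra hn
      push_neg at hn
      have h0 := hgsupp t hn.le
      simp only [hG0def, mem_setOf_eq] at ht
      linarith
    have hWmeas : Measurable fun ω =>
        volume ((fun s : EuclideanSpace ℝ (Fin m) => a ω • s) ⁻¹' G0) := by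
      have h := measurable_measure_prodMk_left
        (ν := (volume : Measure (EuclideanSpace ℝ (Fin m)))) hS₁
      exact h
    have hRmeas : Measurable R := by
      have hRpos := hR
      have hRtoReal : ∀ ω, R ω =
          ((volume ((fun s : EuclideanSpace ℝ (Fin m) => a ω • s) ⁻¹' G0)
            * (volume G0)⁻¹).toReal) ^ ((ν:ℝ)/(m:ℝ)) := by
        intro ω
        rw [hWval, mul_assoc, ENNReal.mul_inv_cancel hG0 hG0top, mul_one,
          ENNReal.toReal_ofReal (Real.rpow_nonneg (hR ω).le _),
          ← Real.rpow_mul (hR ω).le]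
        rw [show ((m:ℝ)/(ν:ℝ)) * ((ν:ℝ)/(m:ℝ)) = 1 by
          have hm' : (m:ℝ) ≠ 0 := Nat.cast_ne_zero.mpr hmpos.ne'
          have hν' : (ν:ℝ) ≠ 0 := Nat.cast_ne_zero.mpr (by omega)
          field_simp]
        exact (Real.rpow_one _).symm
      have hfun : R = fun ω =>
          ((volume ((fun s : EuclideanSpace ℝ (Fin m) => a ω • s) ⁻¹' G0)
            * (volume G0)⁻¹).toReal) ^ ((ν:ℝ)/(m:ℝ)) := funext hRtoReal
      rw [hfun]
      exact (Real.continuous_rpow_const (by positivity)).measurable.comp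
        (ENNReal.measurable_toReal.comp (hWmeas.mul_const _))
    have hF : Measurable fun p : Ω × EuclideanSpace ℝ (Fin m) =>
        R p.1 ^ ((ν₀:ℝ)/(ν:ℝ)) * g (R p.1 ^ (-(ν:ℝ)⁻¹) • p.2) :=
      ((Real.continuous_rpow_const hνν₀nonneg).measurable.comp
        (hRmeas.comp measurable_fst)).mul hjm
    set T : Set (EuclideanSpace ℝ (Fin m) × Ω) :=
      {q | y < R q.2 ^ ((ν₀:ℝ)/(ν:ℝ)) * g (R q.2 ^ (-(ν:ℝ)⁻¹) • q.1)} with hTdef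
    have hT : MeasurableSet T :=
      measurableSet_lt measurable_const (hF.comp measurable_swap)
    have step1 : (∫⁻ s : EuclideanSpace ℝ (Fin m),
        P {ω | y < R ω ^ ((ν₀:ℝ)/(ν:ℝ)) * g (R ω ^ (-(ν:ℝ)⁻¹) • s)} ∂volume)
        = ∫⁻ ω, volume ((fun s : EuclideanSpace ℝ (Fin m) => (s, ω)) ⁻¹' T) ∂P := by
      rw [show (∫⁻ s : EuclideanSpace ℝ (Fin m),
          P {ω | y < R ω ^ ((ν₀:ℝ)/(ν:ℝ)) * g (R ω ^ (-(ν:ℝ)⁻¹) • s)} ∂volume)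
          = ∫⁻ s : EuclideanSpace ℝ (Fin m), P (Prod.mk s ⁻¹' T) ∂volume from rfl,
        ← Measure.prod_apply hT, Measure.prod_apply_symm hT]
    have step2 : ∀ ω, volume ((fun s : EuclideanSpace ℝ (Fin m) => (s, ω)) ⁻¹' T)
        ≤ volume (Metric.closedBall (0 : EuclideanSpace ℝ (Fin m)) 1) * ENNReal.ofReal
          (if y < M * R ω ^ ((ν₀:ℝ)/(ν:ℝ)) then R ω ^ ((m:ℝ)/(ν:ℝ)) else 0) := by
      intro ω
      have hAeq : ((fun s : EuclideanSpace ℝ (Fin m) => (s, ω)) ⁻¹' T)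
          = {s : EuclideanSpace ℝ (Fin m) |
              y < R ω ^ ((ν₀:ℝ)/(ν:ℝ)) * g (R ω ^ (-(ν:ℝ)⁻¹) • s)} := rfl
      by_cases hcond : y < M * R ω ^ ((ν₀:ℝ)/(ν:ℝ))
      · rw [if_pos hcond]
        have hsubball : ((fun s : EuclideanSpace ℝ (Fin m) => (s, ω)) ⁻¹' T)
            ⊆ Metric.closedBall (0 : EuclideanSpace ℝ (Fin m)) (R ω ^ ((ν:ℝ)⁻¹)) := by
          intro s hs
          rw [hAeq, mem_setOf_eq] at hs
          have hgpos := hsub s ω hs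
          have hnorm : ‖R ω ^ (-(ν:ℝ)⁻¹) • s‖ < 1 := by
            by_contra hn
            push_neg at hn
            rw [hgsupp _ hn] at hgpos
            exact lt_irrefl 0 hgpos
          rw [norm_smul, Real.norm_eq_abs] at hnorm
          have hnorm' : a ω * ‖s‖ < 1 := by
            rwa [abs_of_pos (hapos ω)] at hnorm
          have h2 : ‖s‖ < (a ω)⁻¹ := by
            have h3 := mul_lt_mul_of_pos_left hnorm' (inv_pos.2 (hapos ω))
            rwa [← mul_assoc, inv_mul_cancel₀ (hapos ω).ne', one_mul, mul_one] at h3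
          rw [Metric.mem_closedBall, dist_zero_right, ← hainv ω]
          exact h2.le
        calc volume ((fun s : EuclideanSpace ℝ (Fin m) => (s, ω)) ⁻¹' T)
            ≤ volume (Metric.closedBall (0 : EuclideanSpace ℝ (Fin m))
                (R ω ^ ((ν:ℝ)⁻¹))) := measure_mono hsubball
          _ = ENNReal.ofReal ((R ω ^ ((ν:ℝ)⁻¹))
                ^ Module.finrank ℝ (EuclideanSpace ℝ (Fin m))) *
              volume (Metric.closedBall (0 : EuclideanSpace ℝ (Fin m)) 1) :=
              Measure.addHaar_closedBall' volume _ (Real.rpow_nonneg (hR ω).le _)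
          _ = volume (Metric.closedBall (0 : EuclideanSpace ℝ (Fin m)) 1) *
              ENNReal.ofReal (R ω ^ ((m:ℝ)/(ν:ℝ))) := by
              rw [hfr, hpow, mul_comm]
      · rw [if_neg hcond]
        have hemp : ((fun s : EuclideanSpace ℝ (Fin m) => (s, ω)) ⁻¹' T) = ∅ := by
          rw [hAeq, eq_empty_iff_forall_notMem]
          intro s hs
          rw [mem_setOf_eq] at hs
          push_neg at hcond
          have h1 : R ω ^ ((ν₀:ℝ)/(ν:ℝ)) * g (R ω ^ (-(ν:ℝ)⁻¹) • s)
              ≤ R ω ^ ((ν₀:ℝ)/(ν:ℝ)) * M :=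
            mul_le_mul_of_nonneg_left (hgM _) (hrppos ω).le
          rw [mul_comm] at h1
          linarith
        rw [hemp]
        simp
    calc (∫⁻ s : EuclideanSpace ℝ (Fin m),
        P {ω | y < R ω ^ ((ν₀:ℝ)/(ν:ℝ)) * g (R ω ^ (-(ν:ℝ)⁻¹) • s)} ∂volume)
        = ∫⁻ ω, volume ((fun s : EuclideanSpace ℝ (Fin m) => (s, ω)) ⁻¹' T) ∂P := step1
      _ ≤ ∫⁻ ω, volume (Metric.closedBall (0 : EuclideanSpace ℝ (Fin m)) 1) *
            ENNReal.ofReal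
            (if y < M * R ω ^ ((ν₀:ℝ)/(ν:ℝ)) then R ω ^ ((m:ℝ)/(ν:ℝ)) else 0) ∂P :=
          lintegral_mono step2
      _ = volume (Metric.closedBall (0 : EuclideanSpace ℝ (Fin m)) 1) *
          ∫⁻ ω, ENNReal.ofReal
            (if y < M * R ω ^ ((ν₀:ℝ)/(ν:ℝ)) then R ω ^ ((m:ℝ)/(ν:ℝ)) else 0) ∂P :=
          lintegral_const_mul' _ _ (measure_closedBall_lt_top).ne
end

section
/- Let α ∈ (1, 2), c > 0, and let R be a random variable with R > 0 almost surely and lim_{x→∞} x^α P(R > x) = c. On a probability space carrying R, define the random subset of ℝ² given by Ξ := (0, 1] × (0, R]. Then for every λ > 0, Leb₂(Ξ ∩ {t ∈ ℝ² : |t| > λ}) ≥ (R − λ)₊ almost surely, and consequently lim_{λ→∞} λ^{2(α−1)/α} · E[Leb₂(Ξ ∩ {t : |t| > λ})] = ∞; in particular, the grain Ξ does not satisfy condition (2volf), i.e., E[Leb₂(Ξ ∩ {|t| > λ})] is not o(λ^{2(1−α)/α}) as λ → ∞. -/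
open MeasureTheory Set
open scoped ENNReal

lemma vol_pair (A B : Set ℝ) :
    volume {t : EuclideanSpace ℝ (Fin 2) | t 0 ∈ A ∧ t 1 ∈ B} = volume A * volume B := by
  have h := (EuclideanSpace.volume_preserving_symm_measurableEquiv_toLp (Fin 2)).measure_preimage_equiv
    (Set.univ.pi fun i : Fin 2 => if i = 0 then A else B)
  have hs : (MeasurableEquiv.toLp 2 (Fin 2 → ℝ)).symm ⁻¹'
      (Set.univ.pi fun i : Fin 2 => if i = 0 then A else B)
      = {t : EuclideanSpace ℝ (Fin 2) | t 0 ∈ A ∧ t 1 ∈ B} := by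
    ext t
    simp [MeasurableEquiv.toLp, Set.mem_pi, Fin.forall_fin_two]; exact Iff.rfl
  rw [hs] at h
  rw [h, volume_pi_pi]
  simp [Fin.prod_univ_two]

lemma coord_le_norm (t : EuclideanSpace ℝ (Fin 2)) (i : Fin 2) : |t i| ≤ ‖t‖ := by
  rw [EuclideanSpace.norm_eq]
  rw [← Real.sqrt_sq_eq_abs]
  apply Real.sqrt_le_sqrt
  have : |t i| ^ 2 ≤ ∑ j, ‖t j‖ ^ 2 := by
    refine Finset.single_le_sum (f := fun j => ‖t j‖ ^ 2) (fun j _ => by positivity)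
      (Finset.mem_univ i) |>.trans_eq' ?_
    simp [Real.norm_eq_abs]
  simpa [sq_abs] using this

lemma tail_lintegral_fin {Ω : Type*} [MeasurableSpace Ω] (P : Measure Ω) [IsProbabilityMeasure P]
    (α c : ℝ) (hα1 : 1 < α) (R : Ω → ℝ) (hRm : Measurable R) (hR : ∀ᵐ ω ∂P, 0 < R ω)
    (htail : Filter.Tendsto (fun x : ℝ => x ^ α * (P {ω | x < R ω}).toReal)
      Filter.atTop (nhds c)) :
    ∫⁻ ω, ENNReal.ofReal (R ω) ∂P < ∞ := by
  rw [lintegral_eq_lintegral_meas_lt P (hR.mono fun ω h => h.le) hRm.aemeasurable]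
  have hev : ∀ᶠ x in Filter.atTop, x ^ α * (P {ω | x < R ω}).toReal ≤ c + 1 :=
    htail.eventually_le_const (lt_add_one c)
  obtain ⟨M₀, hM₀⟩ := Filter.eventually_atTop.mp hev
  set M : ℝ := max M₀ 1 with hMdef
  have hM1 : (1:ℝ) ≤ M := le_max_right _ _
  have hMpos : (0:ℝ) < M := by linarith
  rw [← Set.Ioc_union_Ioi_eq_Ioi hMpos.le,
    lintegral_union measurableSet_Ioi Set.Ioc_disjoint_Ioi_same]
  have h1 : ∫⁻ t in Ioc (0:ℝ) M, P {ω | t < R ω} < ∞ := by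
    calc ∫⁻ t in Ioc (0:ℝ) M, P {ω | t < R ω} ≤ ∫⁻ _ in Ioc (0:ℝ) M, 1 :=
          lintegral_mono fun t => prob_le_one
      _ = volume (Ioc (0:ℝ) M) := setLIntegral_one _
      _ < ∞ := by rw [Real.volume_Ioc]; exact ENNReal.ofReal_lt_top
  have h2 : ∫⁻ t in Ioi M, P {ω | t < R ω} < ∞ := by
    have hbd : ∀ t ∈ Ioi M, P {ω | t < R ω} ≤ ENNReal.ofReal ((c+1) * t ^ (-α)) := by
      intro t ht
      have htM : M < t := ht
      have htpos : (0:ℝ) < t := lt_of_lt_of_le hMpos htM.le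
      have hkey := hM₀ t ((le_max_left _ _).trans htM.le)
      have hrp : (0:ℝ) < t ^ α := Real.rpow_pos_of_pos htpos _
      have : (P {ω | t < R ω}).toReal ≤ (c+1) * t ^ (-α) := by
        rw [Real.rpow_neg htpos.le, ← div_eq_mul_inv, le_div_iff₀ hrp]
        nlinarith [hkey]
      calc P {ω | t < R ω} = ENNReal.ofReal (P {ω | t < R ω}).toReal :=
            (ENNReal.ofReal_toReal (measure_ne_top _ _)).symm
        _ ≤ _ := ENNReal.ofReal_le_ofReal this
    calc ∫⁻ t in Ioi M, P {ω | t < R ω}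
        ≤ ∫⁻ t in Ioi M, ENNReal.ofReal ((c+1) * t ^ (-α)) :=
          setLIntegral_mono (by fun_prop) hbd
      _ ≤ ∫⁻ t in Ioi M, (‖(c+1) * t ^ (-α)‖₊ : ℝ≥0∞) :=
          lintegral_mono fun t => Real.ofReal_le_enorm _
      _ < ∞ := ((integrableOn_Ioi_rpow_of_lt (by linarith) hMpos).const_mul (c+1)).2
  exact ENNReal.add_lt_top.mpr ⟨h1, h2⟩

/-- the rectangular grain `Ξ = (0,1] × (0,R]` of Example 3 violates
condition (2volf): `Leb₂(Ξ ∩ {|t| > λ}) ≥ (R − λ)₊` a.s., and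
`λ^{2(α−1)/α} E[Leb₂(Ξ ∩ {|t| > λ})] → ∞`; in particular this expectation is not
`o(λ^{2(1−α)/α})`. -/
theorem stmt_16 {Ω : Type*} [MeasurableSpace Ω] (P : Measure Ω) [IsProbabilityMeasure P]
    (α c : ℝ) (hα1 : 1 < α) (hα2 : α < 2) (hc : 0 < c)
    (R : Ω → ℝ) (hRm : Measurable R) (hR : ∀ᵐ ω ∂P, 0 < R ω)
    (htail : Filter.Tendsto (fun x : ℝ => x ^ α * (P {ω | x < R ω}).toReal)
      Filter.atTop (nhds c)) :
    (∀ lam : ℝ, 0 < lam → ∀ᵐ ω ∂P,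
      ENNReal.ofReal (R ω - lam)
        ≤ volume ({t : EuclideanSpace ℝ (Fin 2) |
            t 0 ∈ Set.Ioc (0:ℝ) 1 ∧ t 1 ∈ Set.Ioc (0:ℝ) (R ω)}
          ∩ {t : EuclideanSpace ℝ (Fin 2) | lam < ‖t‖})) ∧
    Filter.Tendsto (fun lam : ℝ => lam ^ (2 * (α - 1) / α) *
        (∫⁻ ω, volume ({t : EuclideanSpace ℝ (Fin 2) |
            t 0 ∈ Set.Ioc (0:ℝ) 1 ∧ t 1 ∈ Set.Ioc (0:ℝ) (R ω)}
          ∩ {t : EuclideanSpace ℝ (Fin 2) | lam < ‖t‖}) ∂P).toReal)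
      Filter.atTop Filter.atTop ∧
    ¬ Filter.Tendsto (fun lam : ℝ => lam ^ (2 * (α - 1) / α) *
        (∫⁻ ω, volume ({t : EuclideanSpace ℝ (Fin 2) |
            t 0 ∈ Set.Ioc (0:ℝ) 1 ∧ t 1 ∈ Set.Ioc (0:ℝ) (R ω)}
          ∩ {t : EuclideanSpace ℝ (Fin 2) | lam < ‖t‖}) ∂P).toReal)
      Filter.atTop (nhds 0) := by
  have hαpos : (0:ℝ) < α := by linarith
  -- Part 1
  have key1 : ∀ lam : ℝ, 0 < lam → ∀ᵐ ω ∂P,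
      ENNReal.ofReal (R ω - lam)
        ≤ volume ({t : EuclideanSpace ℝ (Fin 2) |
            t 0 ∈ Set.Ioc (0:ℝ) 1 ∧ t 1 ∈ Set.Ioc (0:ℝ) (R ω)}
          ∩ {t : EuclideanSpace ℝ (Fin 2) | lam < ‖t‖}) := by
    intro lam hlam
    filter_upwards [hR] with ω hω
    rcases le_or_gt (R ω) lam with h | h
    · simp [ENNReal.ofReal_eq_zero.2 (by linarith : R ω - lam ≤ 0)]
    · have hsub : {t : EuclideanSpace ℝ (Fin 2) |
          t 0 ∈ Set.Ioc (0:ℝ) 1 ∧ t 1 ∈ Set.Ioc lam (R ω)}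
          ⊆ ({t : EuclideanSpace ℝ (Fin 2) |
            t 0 ∈ Set.Ioc (0:ℝ) 1 ∧ t 1 ∈ Set.Ioc (0:ℝ) (R ω)}
          ∩ {t : EuclideanSpace ℝ (Fin 2) | lam < ‖t‖}) := by
        rintro t ⟨ht0, ht1⟩
        refine ⟨⟨ht0, ⟨hlam.trans ht1.1, ht1.2⟩⟩, ?_⟩
        show lam < ‖t‖
        have h1 := coord_le_norm t 1
        have h2 := le_abs_self (t 1)
        have h3 := ht1.1
        linarith
      calc ENNReal.ofReal (R ω - lam)
          = volume {t : EuclideanSpace ℝ (Fin 2) |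
              t 0 ∈ Set.Ioc (0:ℝ) 1 ∧ t 1 ∈ Set.Ioc lam (R ω)} := by
            rw [vol_pair]; simp [Real.volume_Ioc]
        _ ≤ _ := measure_mono hsub
  have key2 : Filter.Tendsto (fun lam : ℝ => lam ^ (2 * (α - 1) / α) *
        (∫⁻ ω, volume ({t : EuclideanSpace ℝ (Fin 2) |
            t 0 ∈ Set.Ioc (0:ℝ) 1 ∧ t 1 ∈ Set.Ioc (0:ℝ) (R ω)}
          ∩ {t : EuclideanSpace ℝ (Fin 2) | lam < ‖t‖}) ∂P).toReal)
      Filter.atTop Filter.atTop := by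
    have hRfin := tail_lintegral_fin P α c hα1 R hRm hR htail
    have hVfin : ∀ lam : ℝ,
        (∫⁻ ω, volume ({t : EuclideanSpace ℝ (Fin 2) |
            t 0 ∈ Set.Ioc (0:ℝ) 1 ∧ t 1 ∈ Set.Ioc (0:ℝ) (R ω)}
          ∩ {t : EuclideanSpace ℝ (Fin 2) | lam < ‖t‖}) ∂P) < ∞ := by
      intro lam
      refine lt_of_le_of_lt (lintegral_mono fun ω => ?_) hRfin
      calc volume ({t : EuclideanSpace ℝ (Fin 2) |
            t 0 ∈ Set.Ioc (0:ℝ) 1 ∧ t 1 ∈ Set.Ioc (0:ℝ) (R ω)}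
          ∩ {t : EuclideanSpace ℝ (Fin 2) | lam < ‖t‖})
          ≤ volume {t : EuclideanSpace ℝ (Fin 2) |
            t 0 ∈ Set.Ioc (0:ℝ) 1 ∧ t 1 ∈ Set.Ioc (0:ℝ) (R ω)} :=
            measure_mono inter_subset_left
        _ ≤ ENNReal.ofReal (R ω) := by rw [vol_pair]; simp [Real.volume_Ioc]
    have hlow : ∀ lam : ℝ, 0 < lam →
        lam * (P {ω | 2*lam < R ω}).toReal ≤
        (∫⁻ ω, volume ({t : EuclideanSpace ℝ (Fin 2) |
            t 0 ∈ Set.Ioc (0:ℝ) 1 ∧ t 1 ∈ Set.Ioc (0:ℝ) (R ω)}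
          ∩ {t : EuclideanSpace ℝ (Fin 2) | lam < ‖t‖}) ∂P).toReal := by
      intro lam hlam
      have hset : MeasurableSet {ω | 2*lam < R ω} := measurableSet_lt measurable_const hRm
      have step1 : ENNReal.ofReal lam * P {ω | 2*lam < R ω}
          ≤ ∫⁻ ω, ENNReal.ofReal (R ω - lam) ∂P := by
        rw [← lintegral_indicator_const hset]
        refine lintegral_mono fun ω => ?_
        by_cases hω : ω ∈ {ω | 2*lam < R ω}
        · rw [Set.indicator_of_mem hω]
          exact ENNReal.ofReal_le_ofReal (by have := hω; simp only [Set.mem_setOf_eq] at this; linarith)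
        · rw [Set.indicator_of_notMem hω]; exact zero_le
      have step2 := step1.trans (lintegral_mono_ae (key1 lam hlam))
      have h' := ENNReal.toReal_mono (hVfin lam).ne step2
      rwa [ENNReal.toReal_mul, ENNReal.toReal_ofReal hlam.le] at h'
    set θ : ℝ := 2 * (α - 1) / α with hθdef
    have hβ : 0 < θ + 1 - α := by
      have : θ + 1 - α = (α - 1) * (2 - α) / α := by
        rw [hθdef]; field_simp; ring
      rw [this]
      exact div_pos (mul_pos (by linarith) (by linarith)) hαpos
    have hmul : Filter.Tendsto (fun lam : ℝ => 2 * lam) Filter.atTop Filter.atTop :=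
      Filter.Tendsto.const_mul_atTop two_pos Filter.tendsto_id
    have htt : Filter.Tendsto
        (fun lam : ℝ => (2*lam) ^ α * (P {ω | 2*lam < R ω}).toReal)
        Filter.atTop (nhds c) := htail.comp hmul
    have hpow : Filter.Tendsto (fun lam : ℝ => (2:ℝ)^(-α) * lam ^ (θ + 1 - α))
        Filter.atTop Filter.atTop :=
      Filter.Tendsto.const_mul_atTop (Real.rpow_pos_of_pos two_pos _) (tendsto_rpow_atTop hβ)
    have hg : Filter.Tendsto
        (fun lam : ℝ => ((2:ℝ)^(-α) * lam ^ (θ+1-α)) *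
          ((2*lam)^α * (P {ω | 2*lam < R ω}).toReal)) Filter.atTop Filter.atTop :=
      Filter.Tendsto.atTop_mul_pos hc hpow htt
    have heq : ∀ᶠ lam : ℝ in Filter.atTop,
        ((2:ℝ)^(-α) * lam ^ (θ+1-α)) * ((2*lam)^α * (P {ω | 2*lam < R ω}).toReal)
        = lam ^ θ * (lam * (P {ω | 2*lam < R ω}).toReal) := by
      filter_upwards [Filter.eventually_ge_atTop (1:ℝ)] with lam hlam
      have hl : (0:ℝ) < lam := lt_of_lt_of_le one_pos hlam
      have e1 : (2:ℝ)^(-α) * (2:ℝ)^α = 1 := by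
        rw [← Real.rpow_add two_pos]; simp
      have e2 : lam ^ (θ+1-α) * lam ^ α = lam ^ θ * lam := by
        rw [← Real.rpow_add hl]
        rw [show θ + 1 - α + α = θ + 1 by ring, Real.rpow_add hl, Real.rpow_one]
      rw [Real.mul_rpow two_pos.le hl.le]
      calc ((2:ℝ)^(-α) * lam ^ (θ+1-α)) * (((2:ℝ)^α * lam^α) * (P {ω | 2*lam < R ω}).toReal)
          = ((2:ℝ)^(-α) * (2:ℝ)^α) * ((lam ^ (θ+1-α) * lam^α) * (P {ω | 2*lam < R ω}).toReal) := by
            ring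
        _ = lam ^ θ * (lam * (P {ω | 2*lam < R ω}).toReal) := by rw [e1, e2]; ring
    have hg' : Filter.Tendsto
        (fun lam : ℝ => lam ^ θ * (lam * (P {ω | 2*lam < R ω}).toReal))
        Filter.atTop Filter.atTop := hg.congr' heq
    refine Filter.tendsto_atTop_mono' Filter.atTop ?_ hg'
    filter_upwards [Filter.eventually_ge_atTop (1:ℝ)] with lam hlam
    have hl : (0:ℝ) < lam := lt_of_lt_of_le one_pos hlam
    exact mul_le_mul_of_nonneg_left (hlow lam hl) (Real.rpow_nonneg hl.le θ)
  exact ⟨key1, key2, not_tendsto_nhds_of_tendsto_atTop key2 0⟩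
end
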